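/- arXiv:1405.6107 — 6 statements merged into one kernel-verified Lean document; each statement's English description precedes it below -/
import Mathlib

section
/- Assume the Continuum Hypothesis. Let X be a Tychonoff (completely regular T1) topological space of countable tightness such that every open cover of X of size at most ω₁ has a countable subcover. Then every open cover of X has a countable subcover. -/
open Set Cardinal Topology

universe u v

/-- A space is quasi-Lindelöf if every open cover has a countable subcover
(no separation axioms assumed). -/
def QuasiLindelofSp (X : Type u) [TopologicalSpace X] : Prop :=
  ∀ 𝒰 : Set (Set X), (∀ U ∈ 𝒰, IsOpen U) → ⋃₀ 𝒰 = Set.univ →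
    ∃ 𝒱 ⊆ 𝒰, 𝒱.Countable ∧ ⋃₀ 𝒱 = Set.univ

/-- Lindelöf in the sense of Engelking: regular (T3, including T1) and
every open cover has a countable subcover. -/
def EngLindelofSp (X : Type u) [TopologicalSpace X] : Prop :=
  RegularSpace X ∧ T1Space X ∧ QuasiLindelofSp X

/-- X is productively Lindelöf if X × Y is Lindelöf for every Lindelöf space Y. -/
def ProductivelyLindelofSp (X : Type u) [TopologicalSpace X] : Prop :=
  ∀ (Y : Type u) [TopologicalSpace Y], EngLindelofSp Y → EngLindelofSp (X × Y)

/-- X is productively quasi-Lindelöf if X × Y is quasi-Lindelöf for every Lindelöf space Y. -/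
def ProductivelyQuasiLindelofSp (X : Type u) [TopologicalSpace X] : Prop :=
  ∀ (Y : Type u) [TopologicalSpace Y], EngLindelofSp Y → QuasiLindelofSp (X × Y)

/-- X is powerfully Lindelöf if X^ω is Lindelöf. -/
def PowerfullyLindelofSp (X : Type u) [TopologicalSpace X] : Prop :=
  EngLindelofSp (ℕ → X)

/-- X is powerfully quasi-Lindelöf if X^ω is quasi-Lindelöf. -/
def PowerfullyQuasiLindelofSp (X : Type u) [TopologicalSpace X] : Prop :=
  QuasiLindelofSp (ℕ → X)

/-- Tightness of X is at most κ. -/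
def TightnessLE (X : Type u) [TopologicalSpace X] (κ : Cardinal.{u}) : Prop :=
  ∀ (A : Set X) (x : X), x ∈ closure A → ∃ B ⊆ A, #B ≤ κ ∧ x ∈ closure B

/-- X has countable tightness. -/
def CountableTightness (X : Type u) [TopologicalSpace X] : Prop :=
  ∀ (A : Set X) (x : X), x ∈ closure A → ∃ B ⊆ A, B.Countable ∧ x ∈ closure B

/-- The Lindelöf number of X is at most κ: every open cover has a subcover of size ≤ κ. -/
def LindelofNumberLE (X : Type u) [TopologicalSpace X] (κ : Cardinal.{u}) : Prop :=
  ∀ 𝒰 : Set (Set X), (∀ U ∈ 𝒰, IsOpen U) → ⋃₀ 𝒰 = Set.univ →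
    ∃ 𝒱 ⊆ 𝒰, #𝒱 ≤ κ ∧ ⋃₀ 𝒱 = Set.univ

/-- The weight of X is at most κ: there is a base of size ≤ κ. -/
def WeightLE (X : Type u) [TopologicalSpace X] (κ : Cardinal.{u}) : Prop :=
  ∃ B : Set (Set X), TopologicalSpace.IsTopologicalBasis B ∧ #B ≤ κ

/-- N is a network for X. -/
def IsNetwork (X : Type u) [TopologicalSpace X] (N : Set (Set X)) : Prop :=
  ∀ (x : X) (U : Set X), IsOpen U → x ∈ U → ∃ n ∈ N, x ∈ n ∧ n ⊆ U

/-- X is linearly Lindelöf: regular (incl. T1) and every open cover linearly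
ordered by inclusion has a countable subcover. -/
def LinearlyLindelofSp (X : Type u) [TopologicalSpace X] : Prop :=
  RegularSpace X ∧ T1Space X ∧
    ∀ 𝒰 : Set (Set X), (∀ U ∈ 𝒰, IsOpen U) → IsChain (· ⊆ ·) 𝒰 → ⋃₀ 𝒰 = Set.univ →
      ∃ 𝒱 ⊆ 𝒰, 𝒱.Countable ∧ ⋃₀ 𝒱 = Set.univ

/-- U ⊆ X^ω is a basic open set: a product of open sets, all but finitely many of
which equal X. -/
def IsBasicOpen (X : Type u) [TopologicalSpace X] (U : Set (ℕ → X)) : Prop :=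
  ∃ V : ℕ → Set X, (∀ i, IsOpen (V i)) ∧ {i | V i ≠ Set.univ}.Finite ∧
    U = Set.pi Set.univ V

/-- A family of subsets of Z is point-κ if every point belongs to at most κ members. -/
def PointLE {Z : Type u} (𝒲 : Set (Set Z)) (κ : Cardinal.{u}) : Prop :=
  ∀ z : Z, #({W ∈ 𝒲 | z ∈ W}) ≤ κ

/-- A non-empty space is zero-dimensional if it is T1 and has a base of clopen sets. -/
def ZeroDimensionalSp (Y : Type u) [TopologicalSpace Y] : Prop :=
  Nonempty Y ∧ T1Space Y ∧
    ∃ B : Set (Set Y), TopologicalSpace.IsTopologicalBasis B ∧ ∀ b ∈ B, IsClopen b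

/-!
Suppose an open cover `𝒰` has no countable subcover. In a regular space, the closure of a countable
set `B` is covered by at most `2 ^ #B ≤ 𝔠 = ℵ₁` members of `𝒰` (one for each trace on `B` of a
neighbourhood whose closure lies in a member of `𝒰`), hence by countably many of them. A closing-off
argument of length `ω₁`, in which all sizes stay `≤ ℵ₁` because `ℵ₁ ^ ℵ₀ = ℵ₁`, yields `A ⊆ X` and
`W ⊆ 𝒰` with `#W ≤ ℵ₁` such that the closure of each countable subset of `A` is covered by
countably many members of `W`, and each countable subfamily of `W` misses some point of `A`. By
countable tightness `W` covers `closure A`, so countably many members of `W` do, a contradiction.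
-/

open Ordinal

theorem Cardinal.continuum_eq_aleph_one_univ (h : Cardinal.continuum.{v} = ℵ₁) :
    Cardinal.continuum.{u} = ℵ₁ := by
  rw [← lift_inj.{u, v}]
  simpa using congrArg lift.{u} h

theorem Cardinal.aleph_one_pow_aleph0 (hCH : Cardinal.continuum.{u} = ℵ₁) :
    (ℵ₁ : Cardinal.{u}) ^ ℵ₀ = ℵ₁ := by
  rw [← hCH, continuum_power_aleph0]

section CountableClosure

variable {α : Type u}

theorem Cardinal.mk_countable_subsets_le (S : Set α) :
    #{C : Set α | C ⊆ S ∧ C.Countable} ≤ max #S ℵ₀ ^ ℵ₀ := by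
  simp_rw [← le_aleph0_iff_set_countable]
  exact mk_bounded_subset_le S ℵ₀

def closureStage (F : Set α → Set α) (i : Ordinal.{u}) : Set α :=
  let S := ⋃ j < i, closureStage F j
  S ∪ ⋃ C ∈ {C : Set α | C ⊆ S ∧ C.Countable}, F C
termination_by i

variable {F : Set α → Set α}

theorem mk_closureStage_le (hCH : Cardinal.continuum.{u} = ℵ₁)
    (hF : ∀ C, C.Countable → (F C).Countable) {i : Ordinal.{u}} (hi : i < ω₁) :
    #(closureStage F i) ≤ ℵ₁ := by
  induction i using WellFoundedLT.induction with
  | ind i ih =>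
  have hS : #(⋃ j < i, closureStage F j) ≤ ℵ₁ :=
    mk_biUnion_le_of_le (lt_omega_iff_card_lt.1 hi).le (aleph0_le_aleph 1) _
      fun j hj => ih j hj (hj.trans hi)
  have hsubsets : #{C : Set α | C ⊆ ⋃ j < i, closureStage F j ∧ C.Countable} ≤ ℵ₁ :=
    (mk_countable_subsets_le _).trans <|
      (power_le_power_right (max_le hS (aleph0_le_aleph 1))).trans_eq (aleph_one_pow_aleph0 hCH)
  rw [closureStage]
  refine (mk_union_le _ _).trans (add_le_of_le (aleph0_le_aleph 1) hS ?_)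
  refine (mk_biUnion_le _ _).trans
    (mul_le_of_le (aleph0_le_aleph 1) hsubsets (ciSup_le' fun C => ?_))
  exact (hF C C.2.2).le_aleph0.trans (aleph0_le_aleph 1)

def countableHull (F : Set α → Set α) : Set α :=
  ⋃ i < (ω₁ : Ordinal.{u}), closureStage F i

theorem mk_countableHull_le (hCH : Cardinal.continuum.{u} = ℵ₁)
    (hF : ∀ C, C.Countable → (F C).Countable) : #(countableHull F) ≤ ℵ₁ :=
  mk_biUnion_le_of_le (card_omega 1).le (aleph0_le_aleph 1) _
    fun _ hi => mk_closureStage_le hCH hF hi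

theorem apply_subset_countableHull {C : Set α} (hCS : C ⊆ countableHull F) (hC : C.Countable) :
    F C ⊆ countableHull F := by
  have : Countable C := hC.to_subtype
  have hmem (c : C) : ∃ j < (ω₁ : Ordinal.{u}), (c : α) ∈ closureStage F j := by
    simpa [countableHull] using hCS c.2
  choose I hI hcI using hmem
  have hi : ⨆ c, I c + 1 < ω₁ := by
    refine iSup_add_one_lt_of_lt_cof ?_ hI
    rw [cof_omega_one]
    exact lt_aleph_one_iff.2 hC.le_aleph0
  refine subset_biUnion_of_mem (u := closureStage F) hi |>.trans' ?_
  rw [closureStage]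
  refine subset_union_of_subset_right (subset_biUnion_of_mem (u := F) (x := C) ?_) _
  refine ⟨fun c hc => ?_, hC⟩
  exact mem_biUnion (lt_iSup_add_one I ⟨c, hc⟩) (hcI ⟨c, hc⟩)

theorem exists_countably_closed_pair (hCH : Cardinal.continuum.{u} = ℵ₁) {β : Type u}
    (f : Set α → Set β) (g : Set β → Set α) (hf : ∀ B, B.Countable → (f B).Countable)
    (hg : ∀ V, V.Countable → (g V).Countable) :
    ∃ (A : Set α) (W : Set β), #W ≤ ℵ₁ ∧ (∀ B ⊆ A, B.Countable → f B ⊆ W) ∧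
      ∀ V ⊆ W, V.Countable → g V ⊆ A := by
  set S := countableHull fun C : Set (α ⊕ β) =>
    Sum.inr '' f (Sum.inl ⁻¹' C) ∪ Sum.inl '' g (Sum.inr ⁻¹' C)
  refine ⟨Sum.inl ⁻¹' S, Sum.inr ⁻¹' S, ?_, fun B hBA hB => ?_, fun V hVW hV => ?_⟩
  · refine (mk_preimage_of_injective _ _ Sum.inr_injective).trans (mk_countableHull_le hCH ?_)
    exact fun C hC => ((hf _ (hC.preimage Sum.inl_injective)).image _).union
      ((hg _ (hC.preimage Sum.inr_injective)).image _)
  · intro b hb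
    refine apply_subset_countableHull (image_subset_iff.2 hBA) (hB.image _) (Or.inl ⟨b, ?_, rfl⟩)
    rwa [preimage_image_eq _ Sum.inl_injective]
  · intro a ha
    refine apply_subset_countableHull (image_subset_iff.2 hVW) (hV.image _) (Or.inr ⟨a, ?_, rfl⟩)
    rwa [preimage_image_eq _ Sum.inr_injective]

end CountableClosure

/-- `[ℵ₁, κ]`-compactness. -/
def LindelofUpTo (X : Type u) [TopologicalSpace X] (κ : Cardinal.{u}) : Prop :=
  ∀ 𝒰 : Set (Set X), (∀ U ∈ 𝒰, IsOpen U) → ⋃₀ 𝒰 = Set.univ → #𝒰 ≤ κ →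
    ∃ 𝒱 ⊆ 𝒰, 𝒱.Countable ∧ ⋃₀ 𝒱 = Set.univ

section Topology

variable {X : Type u} [TopologicalSpace X] {κ : Cardinal.{u}}

theorem IsClosed.exists_countable_subcover_of_lindelofUpTo (h : LindelofUpTo X κ) (hκ : ℵ₀ ≤ κ)
    {K : Set X} (hK : IsClosed K) {𝒲 : Set (Set X)} (hopen : ∀ W ∈ 𝒲, IsOpen W)
    (hcover : K ⊆ ⋃₀ 𝒲) (hcard : #𝒲 ≤ κ) : ∃ 𝒱 ⊆ 𝒲, 𝒱.Countable ∧ K ⊆ ⋃₀ 𝒱 := by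
  obtain ⟨𝒱, h𝒱, h𝒱c, h𝒱cover⟩ := h (insert Kᶜ 𝒲) (forall_mem_insert.2 ⟨hK.isOpen_compl, hopen⟩)
    (by rw [sUnion_insert, ← compl_subset_iff_union, compl_compl]; exact hcover)
    (mk_insert_le.trans (add_le_of_le hκ hcard (one_le_aleph0.trans hκ)))
  refine ⟨𝒱 \ {Kᶜ}, sdiff_singleton_subset_iff.2 h𝒱, h𝒱c.mono sdiff_subset, fun x hx => ?_⟩
  obtain ⟨V, hV, hxV⟩ : x ∈ ⋃₀ 𝒱 := h𝒱cover ▸ mem_univ x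
  exact ⟨V, ⟨hV, fun hVK => (hVK ▸ hxV) hx⟩, hxV⟩

theorem exists_subcover_closure_mk_le_two_pow [RegularSpace X] {B : Set X} {𝒰 : Set (Set X)}
    (hopen : ∀ U ∈ 𝒰, IsOpen U) (hcover : closure B ⊆ ⋃₀ 𝒰) :
    ∃ 𝒲 ⊆ 𝒰, #𝒲 ≤ 2 ^ #B ∧ closure B ⊆ ⋃₀ 𝒲 := by
  have hO (y : closure B) : ∃ O ∈ 𝒰, ∃ V, ((y : X) ∈ V ∧ IsOpen V) ∧ closure V ⊆ O := by
    obtain ⟨O, hO, hyO⟩ := hcover y.2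
    exact ⟨O, hO, (hasBasis_opens_closure (y : X)).mem_iff.1 ((hopen O hO).mem_nhds hyO)⟩
  choose O hO V hV hVO using hO
  let trace (y : closure B) : Set B := (↑) ⁻¹' V y
  refine ⟨range (O ∘ rangeSplitting trace), range_subset_iff.2 fun _ => hO _, ?_, fun x hx => ?_⟩
  · calc #(range (O ∘ rangeSplitting trace)) ≤ #(range trace) := mk_range_le
      _ ≤ #(Set B) := mk_set_le _
      _ = 2 ^ #B := mk_set
  · set y := rangeSplitting trace ⟨trace ⟨x, hx⟩, mem_range_self _⟩
    have htrace : trace y = trace ⟨x, hx⟩ := apply_rangeSplitting trace _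
    have hxy : x ∈ closure (B ∩ V y) := by
      rw [← Subtype.image_preimage_coe, show (↑) ⁻¹' V y = trace y from rfl, htrace,
        Subtype.image_preimage_coe, inter_comm]
      exact (hV ⟨x, hx⟩).2.inter_closure ⟨(hV ⟨x, hx⟩).1, hx⟩
    exact ⟨O y, mem_range_self _, hVO y (closure_mono inter_subset_right hxy)⟩

theorem exists_countable_subcover_closure_of_countable [RegularSpace X] (h : LindelofUpTo X κ)
    (hκ : Cardinal.continuum ≤ κ) {B : Set X} (hB : B.Countable) {𝒰 : Set (Set X)}
    (hopen : ∀ U ∈ 𝒰, IsOpen U) (hcover : closure B ⊆ ⋃₀ 𝒰) :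
    ∃ 𝒱 ⊆ 𝒰, 𝒱.Countable ∧ closure B ⊆ ⋃₀ 𝒱 := by
  obtain ⟨𝒲, h𝒲𝒰, h𝒲card, h𝒲cover⟩ := exists_subcover_closure_mk_le_two_pow hopen hcover
  have h𝒲κ : #𝒲 ≤ κ := h𝒲card.trans <| (power_le_power_left two_ne_zero hB.le_aleph0).trans hκ
  obtain ⟨𝒱, h𝒱𝒲, h𝒱c, h𝒱cover⟩ := isClosed_closure.exists_countable_subcover_of_lindelofUpTo h
    (aleph0_le_continuum.trans hκ) (fun W hW => hopen W (h𝒲𝒰 hW)) h𝒲cover h𝒲κ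
  exact ⟨𝒱, h𝒱𝒲.trans h𝒲𝒰, h𝒱c, h𝒱cover⟩

end Topology

theorem stmt5_general (hCH : Cardinal.continuum = Cardinal.aleph 1)
    (X : Type u) [TopologicalSpace X] [CompletelyRegularSpace X]
    (ht : CountableTightness X)
    (hsmall : ∀ 𝒰 : Set (Set X), (∀ U ∈ 𝒰, IsOpen U) → ⋃₀ 𝒰 = Set.univ →
      #𝒰 ≤ Cardinal.aleph 1 → ∃ 𝒱 ⊆ 𝒰, 𝒱.Countable ∧ ⋃₀ 𝒱 = Set.univ) :
    QuasiLindelofSp X := by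
  intro 𝒰 hopen hcover
  rcases isEmpty_or_nonempty X with hX | hX
  · exact ⟨∅, empty_subset _, countable_empty, Subsingleton.elim _ _⟩
  by_contra! hno
  have hCH' := continuum_eq_aleph_one_univ.{u} hCH
  have hs (B : Set X) (hB : B.Countable) : ∃ 𝒱 ⊆ 𝒰, 𝒱.Countable ∧ closure B ⊆ ⋃₀ 𝒱 :=
    exists_countable_subcover_closure_of_countable hsmall hCH'.le hB hopen (hcover ▸ subset_univ _)
  choose! s hs𝒰 hsc hscover using hs
  have hp (𝒱 : Set (Set X)) (h𝒱 : 𝒱 ⊆ 𝒰) (h𝒱c : 𝒱.Countable) : ∃ x, x ∉ ⋃₀ 𝒱 :=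
    (ne_univ_iff_exists_notMem _).1 (hno 𝒱 h𝒱 h𝒱c)
  choose! p hp using hp
  obtain ⟨A, W, hW, hsW, hpA⟩ := exists_countably_closed_pair hCH' s (fun 𝒱 => {p 𝒱}) hsc
    fun _ _ => countable_singleton _
  have hclosure : closure A ⊆ ⋃₀ (W ∩ 𝒰) := by
    intro x hx
    obtain ⟨B, hBA, hB, hxB⟩ := ht A x hx
    obtain ⟨U, hU, hxU⟩ := hscover B hB hxB
    exact ⟨U, ⟨hsW B hBA hB hU, hs𝒰 B hB hU⟩, hxU⟩
  obtain ⟨𝒱, h𝒱, h𝒱c, h𝒱cover⟩ := isClosed_closure.exists_countable_subcover_of_lindelofUpTo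
    hsmall (aleph0_le_aleph 1) (fun U hU => hopen U hU.2) hclosure
    ((mk_le_mk_of_subset inter_subset_left).trans hW)
  have hpA𝒱 : p 𝒱 ∈ A := hpA 𝒱 (h𝒱.trans inter_subset_left) h𝒱c rfl
  exact hp 𝒱 (h𝒱.trans inter_subset_right) h𝒱c (h𝒱cover (subset_closure hpA𝒱))

/-- Under CH, a Tychonoff space of countable tightness in which every
open cover of size at most ω₁ has a countable subcover is Lindelöf. -/
theorem stmt5 (hCH : Cardinal.continuum = Cardinal.aleph 1)
    (X : Type u) [TopologicalSpace X] [T1Space X] [CompletelyRegularSpace X]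
    (ht : CountableTightness X)
    (hsmall : ∀ 𝒰 : Set (Set X), (∀ U ∈ 𝒰, IsOpen U) → ⋃₀ 𝒰 = Set.univ →
      #𝒰 ≤ Cardinal.aleph 1 → ∃ 𝒱 ⊆ 𝒰, 𝒱.Countable ∧ ⋃₀ 𝒱 = Set.univ) :
    QuasiLindelofSp X :=
  stmt5_general hCH X ht hsmall
end

section
/- Assume the Generalized Continuum Hypothesis (2^κ = κ⁺ for every infinite cardinal κ). Let X be a Tychonoff (completely regular T1) linearly Lindelöf topological space with tightness t(X) < ℵ_ω. Then every open cover of X has a countable subcover. -/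
open Set Cardinal Topology

universe u v

/-!
A linearly Lindelöf space of tightness `≤ τ` has Lindelöf number `≤ 2 ^ τ`, by a closing-off
argument whose limit point is supplied by the chain-cover property: along a well-order of regular
uncountable cofinality, the open sets meeting only a bounded part of a sequence form a chain.
Under GCH this bound is `ℵ_(n+1)`, and a cover of size `ℵ_(k+1)`, enumerated in order type
`ℵ_(k+1)`, becomes a chain of unions of initial segments; its countable subcover shows that `ℵ_k`
members already suffice, and induction brings the cover down to a countable one.
-/

def HasCountableChainSubcovers (X : Type u) [TopologicalSpace X] : Prop :=
  ∀ 𝒰 : Set (Set X), (∀ U ∈ 𝒰, IsOpen U) → IsChain (· ⊆ ·) 𝒰 → ⋃₀ 𝒰 = Set.univ →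
    ∃ 𝒱 ⊆ 𝒰, 𝒱.Countable ∧ ⋃₀ 𝒱 = Set.univ

theorem Order.exists_gt_of_mk_lt_cof {ι : Type*} [LinearOrder ι] {s : Set ι}
    (hs : #s < Order.cof ι) : ∃ j, ∀ i ∈ s, i < j :=
  not_isCofinal_iff.1 fun h => (Order.cof_le h).not_gt hs

theorem Set.Countable.exists_gt {ι : Type*} [LinearOrder ι] (hι : ℵ₀ < Order.cof ι)
    {s : Set ι} (hs : s.Countable) : ∃ j, ∀ i ∈ s, i < j :=
  Order.exists_gt_of_mk_lt_cof (hs.le_aleph0.trans_lt hι)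

theorem exists_eq_apply_image_Iio {ι α : Type*} [LinearOrder ι] [WellFoundedLT ι]
    (F : Set α → α) : ∃ f : ι → α, ∀ i, f i = F (f '' Iio i) := by
  refine ⟨IsWellFounded.fix (· < ·) fun j f => F (range fun k : Iio j => f k k.2), fun i => ?_⟩
  rw [IsWellFounded.fix_eq]
  congr 1
  ext x
  simp

theorem TightnessLE.mono {X : Type u} [TopologicalSpace X] {κ κ' : Cardinal.{u}}
    (h : TightnessLE X κ) (hκ : κ ≤ κ') : TightnessLE X κ' := fun A x hx =>
  let ⟨B, hBA, hB, hxB⟩ := h A x hx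
  ⟨B, hBA, hB.trans hκ, hxB⟩

theorem exists_le_aleph_natCast_of_lt_aleph_omega0 {κ : Cardinal.{u}}
    (hκ : κ < ℵ_ Ordinal.omega0) : ∃ n : ℕ, κ ≤ ℵ_ n := by
  rcases lt_or_ge κ ℵ₀ with hκ₀ | hκ₀
  · exact ⟨0, by simpa using hκ₀.le⟩
  obtain ⟨o, rfl⟩ := mem_range_aleph_iff.2 hκ₀
  obtain ⟨n, rfl⟩ := Ordinal.lt_omega0.1 (aleph_lt_aleph.1 hκ)
  exact ⟨n, le_rfl⟩

namespace HasCountableChainSubcovers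

variable {X : Type u} [TopologicalSpace X] (hX : HasCountableChainSubcovers X)
include hX

theorem exists_eq_univ_of_monotone {ι : Type*} [LinearOrder ι] (hι : ℵ₀ < Order.cof ι)
    {W : ι → Set X} (hWo : ∀ i, IsOpen (W i)) (hW : Monotone W) (hcov : ⋃ i, W i = Set.univ) :
    ∃ i, W i = Set.univ := by
  obtain ⟨𝒱, h𝒱W, h𝒱, h𝒱cov⟩ := hX (range W) (forall_mem_range.2 hWo) hW.isChain_range
    (by rwa [sUnion_range])
  have := h𝒱.to_subtype
  choose idx hidx using fun V : 𝒱 => h𝒱W V.2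
  obtain ⟨j, hj⟩ := (countable_range idx).exists_gt hι
  refine ⟨j, Set.eq_univ_of_univ_subset (h𝒱cov ▸ sUnion_subset fun V hV => ?_)⟩
  exact (hidx ⟨V, hV⟩).symm.subset.trans (hW (hj _ (mem_range_self _)).le)

theorem exists_forall_nhds_not_bddAbove {ι : Type*} [LinearOrder ι] (hι : ℵ₀ < Order.cof ι)
    (a : ι → X) : ∃ x, ∀ U ∈ 𝓝 x, ¬ BddAbove (a ⁻¹' U) := by
  by_contra! hbdd
  let W : ι → Set X := fun j => ⋃₀ {V | IsOpen V ∧ a ⁻¹' V ⊆ Iic j}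
  have hWcov : ⋃ j, W j = Set.univ := by
    refine Set.eq_univ_of_forall fun x => ?_
    obtain ⟨U, hU, j, hj⟩ := hbdd x
    exact mem_iUnion.2 ⟨j, interior U, ⟨isOpen_interior,
      (preimage_mono interior_subset).trans hj⟩, mem_interior_iff_mem_nhds.2 hU⟩
  have hWmono : Monotone W := fun j j' h =>
    sUnion_subset_sUnion fun V hV => ⟨hV.1, hV.2.trans (Iic_subset_Iic.2 h)⟩
  obtain ⟨j, hj⟩ := hX.exists_eq_univ_of_monotone hι
    (fun j => isOpen_sUnion fun V hV => hV.1) hWmono hWcov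
  obtain ⟨j', hj'⟩ := Order.exists_gt_of_mk_lt_cof (s := {j})
    (by simpa using one_lt_aleph0.trans hι)
  obtain ⟨V, hV, haV⟩ := hj ▸ mem_univ (a j')
  exact (hj' j rfl).not_ge (hV.2 haV)

theorem exists_subcover_mk_lt {μ : Cardinal.{u}} (hμ : μ.IsRegular) (hμ₀ : ℵ₀ < μ)
    {γ : Set (Set X)} (hop : ∀ U ∈ γ, IsOpen U) (hcov : ⋃₀ γ = Set.univ) (hγ : #γ ≤ μ) :
    ∃ 𝒱 ⊆ γ, #𝒱 < μ ∧ ⋃₀ 𝒱 = Set.univ := by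
  have hcof : ℵ₀ < Order.cof μ.ord.ToType := by rwa [Ordinal.cof_toType, hμ.cof_ord]
  obtain ⟨g⟩ : Nonempty (γ ↪ μ.ord.ToType) := by rwa [← Cardinal.le_def, mk_toType, card_ord]
  let W : μ.ord.ToType → Set X := fun j => ⋃ (U : γ) (_ : g U < j), U
  have hWcov : ⋃ j, W j = Set.univ := by
    refine Set.eq_univ_of_forall fun x => ?_
    obtain ⟨U, hU, hxU⟩ := hcov ▸ Set.mem_univ x
    obtain ⟨j, hj⟩ := (countable_singleton (g ⟨U, hU⟩)).exists_gt hcof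
    exact mem_iUnion.2 ⟨j, mem_iUnion₂.2 ⟨⟨U, hU⟩, hj _ rfl, hxU⟩⟩
  have hWmono : Monotone W := fun j j' h =>
    iUnion₂_mono' fun U (hU : g U < j) => ⟨U, hU.trans_le h, le_rfl⟩
  obtain ⟨j, hj⟩ := hX.exists_eq_univ_of_monotone hcof (W := W)
    (fun j => isOpen_iUnion fun U => isOpen_iUnion fun _ => hop U U.2) hWmono hWcov
  refine ⟨Subtype.val '' (g ⁻¹' Iio j), Subtype.coe_image_subset _ _, ?_, ?_⟩
  · exact mk_image_le.trans_lt
      ((mk_preimage_of_injective g _ g.injective).trans_lt (by simpa using mk_Iio_lt j))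
  · rw [sUnion_image]
    exact hj

theorem exists_countable_subcover_of_mk_le_aleph_natCast (n : ℕ) {γ : Set (Set X)}
    (hop : ∀ U ∈ γ, IsOpen U) (hcov : ⋃₀ γ = Set.univ) (hγ : #γ ≤ ℵ_ n) :
    ∃ 𝒱 ⊆ γ, 𝒱.Countable ∧ ⋃₀ 𝒱 = Set.univ := by
  induction n generalizing γ with
  | zero => exact ⟨γ, subset_rfl, le_aleph0_iff_set_countable.1 (by simpa using hγ), hcov⟩
  | succ n ih =>
    have hsucc : ℵ_ (n + 1 : ℕ) = Order.succ (ℵ_ n) := by rw [Nat.cast_succ, succ_aleph]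
    obtain ⟨𝒱, h𝒱γ, h𝒱, h𝒱cov⟩ := hX.exists_subcover_mk_lt
      (hsucc ▸ isRegular_succ (aleph0_le_aleph n)) (aleph0_lt_aleph_one.trans_le
        (aleph_le_aleph.2 (by exact_mod_cast n.succ_pos))) hop hcov hγ
    obtain ⟨𝒲, h𝒲𝒱, h𝒲, h𝒲cov⟩ :=
      ih (fun U hU => hop U (h𝒱γ hU)) h𝒱cov (Order.lt_succ_iff.1 (hsucc ▸ h𝒱))
    exact ⟨𝒲, h𝒲𝒱.trans h𝒱γ, h𝒲, h𝒲cov⟩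

end HasCountableChainSubcovers

section RegularSpace

variable {X : Type u} [TopologicalSpace X] [RegularSpace X] {γ : Set (Set X)}

/- For each `A ⊆ B` whose closure fits in a member of `γ`, pick one such member. By regularity
every `x ∈ closure B` has a closed neighbourhood `t` inside some `U ∈ γ`, and then `A := int t ∩ B`
has `x` in its closure. -/
theorem exists_subset_mk_le_two_pow_closure_subset_sUnion (hop : ∀ U ∈ γ, IsOpen U)
    (hcov : ⋃₀ γ = Set.univ) (B : Set X) :
    ∃ 𝒮 ⊆ γ, #𝒮 ≤ 2 ^ #B ∧ closure B ⊆ ⋃₀ 𝒮 := by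
  let P : Set (Set X) := {A | A ⊆ B ∧ ∃ U ∈ γ, closure A ⊆ U}
  choose u huγ hAu using fun A : P => A.2.2
  refine ⟨range u, range_subset_iff.2 huγ, ?_, fun x hx => ?_⟩
  · calc #(range u) ≤ #P := mk_range_le
      _ ≤ #(𝒫 B) := mk_le_mk_of_subset fun A hA => hA.1
      _ = 2 ^ #B := mk_powerset B
  obtain ⟨U, hU, hxU⟩ := hcov ▸ Set.mem_univ x
  obtain ⟨t, ht, htc, htU⟩ := exists_mem_nhds_isClosed_subset ((hop U hU).mem_nhds hxU)
  have hA : interior t ∩ B ∈ P := ⟨inter_subset_right, U, hU,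
    (closure_minimal (inter_subset_left.trans interior_subset) htc).trans htU⟩
  exact ⟨_, mem_range_self ⟨_, hA⟩,
    hAu ⟨_, hA⟩ (isOpen_interior.inter_closure ⟨mem_interior_iff_mem_nhds.2 ht, hx⟩)⟩

theorem exists_monotone_closure_subset_sUnion {τ : Cardinal.{u}} (hτ : ℵ₀ ≤ τ)
    (ht : TightnessLE X τ) (hop : ∀ U ∈ γ, IsOpen U) (hcov : ⋃₀ γ = Set.univ) :
    ∃ Γ : Set X → Set (Set X), Monotone Γ ∧ (∀ D, Γ D ⊆ γ) ∧
      (∀ D, closure D ⊆ ⋃₀ Γ D) ∧ ∀ D : Set X, #D ≤ 2 ^ τ → #(Γ D) ≤ 2 ^ τ := by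
  choose S hSγ hScard hScl using exists_subset_mk_le_two_pow_closure_subset_sUnion hop hcov
  have hκ : ℵ₀ ≤ 2 ^ τ := hτ.trans (cantor τ).le
  refine ⟨fun D => ⋃ B ∈ {B | B ⊆ D ∧ #B ≤ τ}, S B, fun D D' h => ?_, fun D => ?_,
    fun D x hx => ?_, fun D hD => ?_⟩
  · exact biUnion_subset_biUnion_left fun B hB => ⟨hB.1.trans h, hB.2⟩
  · exact iUnion₂_subset fun B _ => hSγ B
  · obtain ⟨B, hBD, hB, hxB⟩ := ht D x hx
    obtain ⟨U, hU, hxU⟩ := hScl B hxB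
    exact ⟨U, mem_biUnion (show B ∈ {B | B ⊆ D ∧ #B ≤ τ} from ⟨hBD, hB⟩) hU, hxU⟩
  have hsmall : #{B | B ⊆ D ∧ #B ≤ τ} ≤ 2 ^ τ :=
    calc #{B | B ⊆ D ∧ #B ≤ τ} ≤ max #D ℵ₀ ^ τ := mk_bounded_subset_le D τ
      _ ≤ (2 ^ τ) ^ τ := power_le_power_right (max_le hD hκ)
      _ = 2 ^ τ := by rw [← power_mul, mul_eq_self hτ]
  calc #(⋃ B ∈ {B | B ⊆ D ∧ #B ≤ τ}, S B)
      ≤ #{B | B ⊆ D ∧ #B ≤ τ} * ⨆ B : {B | B ⊆ D ∧ #B ≤ τ}, #(S B) := mk_biUnion_le _ _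
    _ ≤ 2 ^ τ * 2 ^ τ := mul_le_mul' hsmall
      (ciSup_le' fun B => (hScard B).trans (power_le_power_left two_ne_zero B.2.2))
    _ = 2 ^ τ := mul_eq_self hκ

/- Closing-off argument: if no `2 ^ τ` members of `γ` cover `X`, choose points
`f i ∉ ⋃₀ Γ (f '' Iio i)` along a well-order of type `(2 ^ τ)⁺`. A complete accumulation point `x`
of `f` lies, by tightness, in the closure of an initial segment `f '' Iio j`, so its neighbourhood
`⋃₀ Γ (f '' Iio j)` contains no `f i` with `i > j`. -/
theorem lindelofNumberLE_two_pow_of_tightnessLE (hX : HasCountableChainSubcovers X)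
    {τ : Cardinal.{u}} (hτ : ℵ₀ ≤ τ) (ht : TightnessLE X τ) : LindelofNumberLE X (2 ^ τ) := by
  intro γ hop hcov
  obtain ⟨Γ, hΓmono, hΓγ, hΓcl, hΓcard⟩ := exists_monotone_closure_subset_sUnion hτ ht hop hcov
  by_contra! hγ
  have hout : ∀ D : Set X, #D ≤ 2 ^ τ → ∃ x, x ∉ ⋃₀ Γ D := fun D hD => by
    by_contra! h
    exact hγ _ (hΓγ D) (hΓcard D hD) (Set.eq_univ_of_forall h)
  have : Nonempty X := ⟨(hout ∅ (by simp)).choose⟩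
  have hκ : ℵ₀ ≤ 2 ^ τ := hτ.trans (cantor τ).le
  let ι := (Order.succ (2 ^ τ : Cardinal.{u})).ord.ToType
  have hcof : Order.cof ι = Order.succ (2 ^ τ) := by
    rw [Ordinal.cof_toType, (isRegular_succ hκ).cof_ord]
  obtain ⟨f, hf⟩ := exists_eq_apply_image_Iio (ι := ι) fun D => Classical.epsilon (· ∉ ⋃₀ Γ D)
  have hIio : ∀ i : ι, #(Iio i) ≤ 2 ^ τ := fun i =>
    Order.lt_succ_iff.1 (by simpa [ι] using mk_Iio_lt i)
  have hfout : ∀ i, f i ∉ ⋃₀ Γ (f '' Iio i) := fun i =>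
    hf i ▸ Classical.epsilon_spec (hout _ (mk_image_le.trans (hIio i)))
  obtain ⟨x, hx⟩ := hX.exists_forall_nhds_not_bddAbove
    (by rw [hcof]; exact hκ.trans_lt (Order.lt_succ _)) f
  have : Nonempty ι := Order.cof_ne_zero_iff.1 (by simp [hcof])
  have hxf : x ∈ closure (range f) := mem_closure_iff_nhds.2 fun U hU => by
    obtain ⟨i, hi⟩ := nonempty_of_not_bddAbove (hx U hU)
    exact ⟨f i, hi, mem_range_self i⟩
  obtain ⟨B, hBf, hB, hxB⟩ := ht _ x hxf
  choose idx hidx using fun b : B => hBf b.2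
  obtain ⟨j, hj⟩ := Order.exists_gt_of_mk_lt_cof (s := range idx)
    (by rw [hcof]; exact mk_range_le.trans_lt (hB.trans_lt ((cantor τ).trans (Order.lt_succ _))))
  have hBj : B ⊆ f '' Iio j := fun b hb =>
    ⟨idx ⟨b, hb⟩, hj _ (mem_range_self _), hidx ⟨b, hb⟩⟩
  have hO : IsOpen (⋃₀ Γ (f '' Iio j)) := isOpen_sUnion fun U hU => hop U (hΓγ _ hU)
  refine hx _ (hO.mem_nhds (hΓcl _ (closure_mono hBj hxB))) ⟨j, fun i hi => ?_⟩
  by_contra! hji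
  exact hfout i (sUnion_mono (hΓmono (image_mono (Iio_subset_Iio hji.le))) hi)

end RegularSpace

theorem stmt6_general (hGCH : ∀ κ : Cardinal.{u}, ℵ₀ ≤ κ → 2 ^ κ = Order.succ κ)
    (X : Type u) [TopologicalSpace X]
    (hlin : LinearlyLindelofSp X)
    (ht : ∃ κ : Cardinal.{u}, κ < Cardinal.aleph Ordinal.omega0 ∧ TightnessLE X κ) :
    QuasiLindelofSp X := by
  obtain ⟨κ, hκ, hXκ⟩ := ht
  obtain ⟨n, hn⟩ := exists_le_aleph_natCast_of_lt_aleph_omega0 hκ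
  have : RegularSpace X := hlin.1
  have hX : HasCountableChainSubcovers X := hlin.2.2
  have hGCHn : (2 : Cardinal) ^ ℵ_ n = ℵ_ (n + 1 : ℕ) := by
    rw [hGCH _ (aleph0_le_aleph _), Nat.cast_succ, succ_aleph]
  intro γ hop hcov
  obtain ⟨γ', hγ'γ, hγ', hγ'cov⟩ := lindelofNumberLE_two_pow_of_tightnessLE hX
    (aleph0_le_aleph n) (hXκ.mono hn) γ hop hcov
  obtain ⟨𝒱, h𝒱γ', h𝒱, h𝒱cov⟩ := hX.exists_countable_subcover_of_mk_le_aleph_natCast (n + 1)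
    (fun U hU => hop U (hγ'γ hU)) hγ'cov (hGCHn ▸ hγ')
  exact ⟨𝒱, h𝒱γ'.trans hγ'γ, h𝒱, h𝒱cov⟩

/-- Under GCH, every Tychonoff linearly Lindelöf space with tightness
less than ℵ_ω is Lindelöf. -/
theorem stmt6 (hGCH : ∀ κ : Cardinal.{u}, ℵ₀ ≤ κ → 2 ^ κ = Order.succ κ)
    (X : Type u) [TopologicalSpace X] [T1Space X] [CompletelyRegularSpace X]
    (hlin : LinearlyLindelofSp X)
    (ht : ∃ κ : Cardinal.{u}, κ < Cardinal.aleph Ordinal.omega0 ∧ TightnessLE X κ) :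
    QuasiLindelofSp X :=
  stmt6_general hGCH X hlin ht
end

section
/- If X is a linearly Lindelöf topological space, then every open cover of X of size less than ℵ_ω has a countable subcover. -/
/-!
Well-order a cover of size `ℵ_(n+1)` in type `ω_(n+1)` and take the unions of its initial
segments. They form an open chain covering the space, so countably many of them cover it;
as `ω_(n+1)` has uncountable cofinality, these countably many segments are bounded, so the
members of a single proper initial segment, of size at most `ℵ_n`, already cover the space.
Induction on `n` brings the size down to `ℵ₀`.
-/

open Set Cardinal Topology

universe u v

def ChainLindelof (X : Type u) [TopologicalSpace X] : Prop :=
  ∀ 𝒰 : Set (Set X), (∀ U ∈ 𝒰, IsOpen U) → IsChain (· ⊆ ·) 𝒰 → ⋃₀ 𝒰 = Set.univ →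
    ∃ 𝒱 ⊆ 𝒰, 𝒱.Countable ∧ ⋃₀ 𝒱 = Set.univ

theorem LinearlyLindelofSp.chainLindelof {X : Type u} [TopologicalSpace X]
    (h : LinearlyLindelofSp X) : ChainLindelof X :=
  h.2.2

theorem Cardinal.exists_le_aleph_nat_of_lt_aleph_omega0 {c : Cardinal.{u}}
    (hc : c < ℵ_ Ordinal.omega0) : ∃ n : ℕ, c ≤ ℵ_ n := by
  rw [aleph_limit Ordinal.isSuccLimit_omega0, lt_ciSup_iff' bddAbove_of_small] at hc
  obtain ⟨⟨a, ha⟩, hca⟩ := hc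
  obtain ⟨n, rfl⟩ := Ordinal.lt_omega0.1 ha
  exact ⟨n, hca.le⟩

namespace ChainLindelof

variable {X : Type u} [TopologicalSpace X]

theorem exists_iUnion_lt_eq_univ (hX : ChainLindelof X) {ι α : Type*} [LinearOrder α]
    (hα : ℵ₀ < Order.cof α) {U : ι → Set X} (hU : ∀ i, IsOpen (U i)) (hcov : ⋃ i, U i = Set.univ)
    (r : ι → α) : ∃ β, ⋃ (i) (_ : r i < β), U i = Set.univ := by
  set W : α → Set X := fun a => ⋃ (i) (_ : r i ≤ a), U i
  have hW : Monotone W := fun a b hab => iUnion₂_mono' fun i hi => ⟨i, hi.trans hab, subset_rfl⟩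
  have hWcov : ⋃₀ range W = Set.univ := by
    refine Set.eq_univ_of_forall fun x => ?_
    obtain ⟨i, hx⟩ := mem_iUnion.1 (hcov ▸ Set.mem_univ x)
    exact ⟨W (r i), mem_range_self _, mem_iUnion₂.2 ⟨i, le_rfl, hx⟩⟩
  obtain ⟨𝒱, h𝒱W, h𝒱c, h𝒱cov⟩ := hX (range W)
    (forall_mem_range.2 fun a => isOpen_biUnion fun i _ => hU i) hW.isChain_range hWcov
  choose a ha using fun V : 𝒱 => h𝒱W V.2
  have : Countable 𝒱 := h𝒱c.to_subtype
  obtain ⟨β, hβ⟩ := not_isCofinal_iff.1 fun h => (Order.cof_le h).not_gt <|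
    (countable_range a).le_aleph0.trans_lt hα
  refine ⟨β, Set.eq_univ_of_forall fun x => ?_⟩
  obtain ⟨V, hV, hxV⟩ := h𝒱cov.symm ▸ Set.mem_univ x
  obtain ⟨i, hi, hx⟩ := mem_iUnion₂.1 ((ha ⟨V, hV⟩).symm ▸ hxV : x ∈ W (a ⟨V, hV⟩))
  exact mem_iUnion₂.2 ⟨i, hi.trans_lt (hβ _ (mem_range_self _)), hx⟩

theorem exists_subcover_card_lt (hX : ChainLindelof X) {κ : Cardinal.{u}}
    (hκ : ℵ₀ < κ.ord.cof) {𝒰 : Set (Set X)} (hop : ∀ U ∈ 𝒰, IsOpen U) (hcov : ⋃₀ 𝒰 = Set.univ)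
    (h𝒰 : #𝒰 ≤ κ) : ∃ 𝒱 ⊆ 𝒰, #𝒱 < κ ∧ ⋃₀ 𝒱 = Set.univ := by
  obtain ⟨e⟩ : Nonempty (𝒰 ↪ κ.ord.ToType) := by rwa [← Cardinal.le_def, mk_toType, card_ord]
  obtain ⟨β, hβ⟩ := hX.exists_iUnion_lt_eq_univ (by rwa [Ordinal.cof_toType])
    (fun U : 𝒰 => hop U U.2) (by rwa [← sUnion_eq_iUnion]) e
  refine ⟨Subtype.val '' (e ⁻¹' Iio β), image_subset_iff.2 fun U _ => U.2, ?_, ?_⟩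
  · calc #(Subtype.val '' (e ⁻¹' Iio β)) ≤ #(e ⁻¹' Iio β) := mk_image_le
      _ ≤ #(Iio β) := mk_preimage_of_injective _ _ e.injective
      _ < κ := by simpa using mk_Iio_lt β
  · simpa [sUnion_image] using hβ

theorem exists_countable_subcover_of_card_le_aleph_nat (hX : ChainLindelof X) :
    ∀ (n : ℕ) {𝒰 : Set (Set X)}, (∀ U ∈ 𝒰, IsOpen U) → ⋃₀ 𝒰 = Set.univ → #𝒰 ≤ ℵ_ n →
      ∃ 𝒱 ⊆ 𝒰, 𝒱.Countable ∧ ⋃₀ 𝒱 = Set.univ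
  | 0, 𝒰, _, hcov, h𝒰 => ⟨𝒰, subset_rfl, le_aleph0_iff_set_countable.1 (by simpa using h𝒰), hcov⟩
  | n + 1, 𝒰, hop, hcov, h𝒰 => by
    obtain ⟨𝒱, h𝒱𝒰, h𝒱, h𝒱cov⟩ := hX.exists_subcover_card_lt
      (by rw [(isRegular_aleph_add_one n).cof_ord]; exact aleph0_lt_aleph_one.trans_le (aleph_le_aleph.2 (by simp)))
      hop hcov (by exact_mod_cast h𝒰)
    rw [← succ_aleph, Order.lt_succ_iff] at h𝒱
    obtain ⟨𝒲, h𝒲𝒱, h𝒲, h𝒲cov⟩ :=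
      hX.exists_countable_subcover_of_card_le_aleph_nat n (fun U hU => hop U (h𝒱𝒰 hU)) h𝒱cov h𝒱
    exact ⟨𝒲, h𝒲𝒱.trans h𝒱𝒰, h𝒲, h𝒲cov⟩

end ChainLindelof

/-- In a linearly Lindelöf space, every open cover of size less than
ℵ_ω has a countable subcover. -/
theorem stmt9 (X : Type u) [TopologicalSpace X] (hlin : LinearlyLindelofSp X)
    (𝒰 : Set (Set X)) (hop : ∀ U ∈ 𝒰, IsOpen U) (hcov : ⋃₀ 𝒰 = Set.univ)
    (hsize : #𝒰 < Cardinal.aleph Ordinal.omega0) :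
    ∃ 𝒱 ⊆ 𝒰, 𝒱.Countable ∧ ⋃₀ 𝒱 = Set.univ := by
  obtain ⟨n, hn⟩ := exists_le_aleph_nat_of_lt_aleph_omega0 hsize
  exact hlin.chainLindelof.exists_countable_subcover_of_card_le_aleph_nat n hop hcov hn
end

section
/- Let κ be an infinite cardinal. If there exists a productively quasi-Lindelöf topological space X with weight w(X) ≤ κ that is not powerfully quasi-Lindelöf, then there exists a zero-dimensional productively Lindelöf space Y with weight w(Y) ≤ κ that is not powerfully Lindelöf. -/
open Set Cardinal Topology

universe u v

section Aux
attribute [local instance 0] Classical.propDecidable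
set_option linter.unusedSectionVars false
set_option linter.unusedVariables false

-- Lemma: quasi-Lindelöf × compact is quasi-Lindelöf
theorem quasi_prod_compact {Z K : Type u} [TopologicalSpace Z] [TopologicalSpace K]
    [CompactSpace K] (hZ : QuasiLindelofSp Z) : QuasiLindelofSp (Z × K) := by
  intro 𝒰 hop hcov
  -- Step A: tube lemma per point z
  have tube : ∀ z : Z, ∃ (N : Set Z) (t : Set (Set (Z × K))),
      IsOpen N ∧ z ∈ N ∧ t ⊆ 𝒰 ∧ t.Countable ∧ N ×ˢ (univ : Set K) ⊆ ⋃₀ t := by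
    intro z
    have hpt : ∀ k : K, ∃ (U : Set (Z × K)) (V : Set Z) (W : Set K),
        U ∈ 𝒰 ∧ IsOpen V ∧ IsOpen W ∧ z ∈ V ∧ k ∈ W ∧ V ×ˢ W ⊆ U := by
      intro k
      have : (z, k) ∈ ⋃₀ 𝒰 := by rw [hcov]; trivial
      obtain ⟨U, hU, hmem⟩ := this
      obtain ⟨V, W, hV, hW, hz, hk, hsub⟩ := isOpen_prod_iff.1 (hop U hU) z k hmem
      exact ⟨U, V, W, hU, hV, hW, hz, hk, hsub⟩
    choose U V W hU hV hW hz hk hsub using hpt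
    have hcovK : (univ : Set K) ⊆ ⋃ k : K, W k := fun k _ => mem_iUnion.2 ⟨k, hk k⟩
    obtain ⟨t₀, ht₀⟩ := isCompact_univ.elim_finite_subcover W hW hcovK
    refine ⟨⋂ k ∈ t₀, V k, U '' ↑t₀, ?_, ?_, ?_, ?_, ?_⟩
    · exact isOpen_biInter_finset fun k _ => hV k
    · exact mem_biInter fun k _ => hz k
    · rintro _ ⟨k, _, rfl⟩; exact hU k
    · exact (t₀.finite_toSet.image U).countable
    · rintro ⟨z', k'⟩ ⟨hz', -⟩
      obtain ⟨k, hkt, hk'⟩ := mem_iUnion₂.1 (ht₀ (mem_univ k'))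
      refine ⟨U k, ⟨k, hkt, rfl⟩, hsub k ⟨?_, hk'⟩⟩
      exact mem_iInter₂.1 hz' k hkt
  choose N t hN hzN ht𝒰 htc hNt using tube
  -- Step B: quasi-Lindelöf of Z on the N's
  obtain ⟨𝒩₀, h𝒩₀sub, h𝒩₀c, h𝒩₀cov⟩ := hZ {S | ∃ z, S = N z}
    (by rintro S ⟨z, rfl⟩; exact hN z)
    (by
      apply eq_univ_of_forall; intro z
      exact ⟨N z, ⟨z, rfl⟩, hzN z⟩)
  classical
  set Ψ : Set Z → Set (Set (Z × K)) := fun S =>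
    if hS : ∃ z, S = N z then t hS.choose else ∅ with hΨ
  refine ⟨⋃₀ (Ψ '' 𝒩₀), ?_, ?_, ?_⟩
  · rintro U ⟨_, ⟨S, hS, rfl⟩, hU⟩
    by_cases hS' : ∃ z, S = N z
    · rw [hΨ] at hU; simp only [dif_pos hS'] at hU; exact ht𝒰 _ hU
    · rw [hΨ] at hU; simp only [dif_neg hS'] at hU; exact absurd hU (notMem_empty U)
  · refine (h𝒩₀c.image Ψ).sUnion ?_
    rintro _ ⟨S, hS, rfl⟩
    by_cases hS' : ∃ z, S = N z
    · rw [hΨ]; simp only [dif_pos hS']; exact htc _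
    · rw [hΨ]; simp only [dif_neg hS']; exact countable_empty
  · apply eq_univ_of_forall
    rintro ⟨z, k⟩
    have : z ∈ ⋃₀ 𝒩₀ := by rw [h𝒩₀cov]; trivial
    obtain ⟨S, hS, hzS⟩ := this
    have hS' : ∃ z', S = N z' := h𝒩₀sub hS
    have hz' : z ∈ N hS'.choose := by rw [← hS'.choose_spec]; exact hzS
    have : (z, k) ∈ ⋃₀ t hS'.choose := hNt hS'.choose ⟨hz', mem_univ k⟩
    obtain ⟨U, hUt, hmem⟩ := this
    refine ⟨U, ⟨Ψ S, ⟨S, hS, rfl⟩, ?_⟩, hmem⟩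
    rw [hΨ]; simp only [dif_pos hS']; exact hUt


variable {X : Type u} [TopologicalSpace X] (𝔅 : Set (Set X))

/-- f is an adherence pattern at x. -/
def Adh (x : X) (f : ↥𝔅 → Bool) : Prop :=
  ∀ (s : Finset ↥𝔅) (U : Set X), IsOpen U → x ∈ U →
    ∃ x' ∈ U, ∀ B ∈ s, (f B = true ↔ x' ∈ (B : Set X))

def Yhat : Set (↥𝔅 → Bool) := {f | ∃ x, Adh 𝔅 x f}

noncomputable def chi (x : X) : ↥𝔅 → Bool :=
  fun B => if x ∈ (B : Set X) then true else false

theorem chi_eq_true {x : X} {B : ↥𝔅} : chi 𝔅 x B = true ↔ x ∈ (B : Set X) := by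
  unfold chi; split <;> simp_all

theorem adh_chi (x : X) : Adh 𝔅 x (chi 𝔅 x) := by
  intro s U _ hx
  exact ⟨x, hx, fun B _ => chi_eq_true 𝔅⟩

theorem Adh.mem_true {x : X} {f : ↥𝔅 → Bool} (h : Adh 𝔅 x f) {B : ↥𝔅}
    (hBo : IsOpen (B : Set X)) (hx : x ∈ (B : Set X)) : f B = true := by
  obtain ⟨x', hx', hiff⟩ := h {B} (B : Set X) hBo hx
  exact (hiff B (Finset.mem_singleton_self B)).2 hx'

def Pat (s : Finset ↥𝔅) (g : ↥𝔅 → Bool) : Set (↥𝔅 → Bool) :=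
  {f | ∀ B ∈ s, f B = g B}

theorem isClopen_Pat (s : Finset ↥𝔅) (g : ↥𝔅 → Bool) : IsClopen (Pat 𝔅 s g) := by
  have : Pat 𝔅 s g = ⋂ B ∈ s, (fun f : ↥𝔅 → Bool => f B) ⁻¹' {g B} := by
    ext f; simp [Pat]
  rw [this]
  constructor
  · exact isClosed_biInter fun B _ =>
      (isClosed_discrete _).preimage (continuous_apply B)
  · exact isOpen_biInter_finset fun B _ =>
      (isOpen_discrete _).preimage (continuous_apply B)

theorem mem_Pat_self (s : Finset ↥𝔅) (g : ↥𝔅 → Bool) : g ∈ Pat 𝔅 s g :=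
  fun _ _ => rfl

def YBase : Set (Set ↥(Yhat 𝔅)) :=
  {S | ∃ s t : Finset ↥𝔅,
    S = Subtype.val ⁻¹' Pat 𝔅 s (fun B => if B ∈ t then true else false)}

theorem YBase_clopen : ∀ b ∈ YBase 𝔅, IsClopen b := by
  rintro _ ⟨s, t, rfl⟩
  exact (isClopen_Pat 𝔅 s _).preimage continuous_subtype_val

theorem YBase_basis : TopologicalSpace.IsTopologicalBasis (YBase 𝔅) := by
  apply TopologicalSpace.isTopologicalBasis_of_isOpen_of_nhds
  · intro b hb; exact (YBase_clopen 𝔅 b hb).isOpen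
  · intro y O hy hO
    obtain ⟨Q, hQ, rfl⟩ := isOpen_induced_iff.1 hO
    obtain ⟨I, u, hIu, hsub⟩ := isOpen_pi_iff.1 hQ y.val hy
    classical
    set t : Finset ↥𝔅 := I.filter (fun B => y.val B = true) with ht
    set g : ↥𝔅 → Bool := fun B => if B ∈ t then true else false with hg
    have hgy : ∀ B ∈ I, g B = y.val B := by
      intro B hB
      by_cases hyB : y.val B = true
      · simp [hg, ht, Finset.mem_filter, hB, hyB]
      · have : y.val B = false := by simpa using hyB
        simp [hg, ht, Finset.mem_filter, hyB, this]
    refine ⟨Subtype.val ⁻¹' Pat 𝔅 I g, ⟨I, t, rfl⟩, ?_, ?_⟩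
    · exact fun B hB => (hgy B hB).symm
    · intro f hf
      apply hsub
      intro B hB
      have : f.val B = y.val B := (hf B hB).trans (hgy B hB)
      rw [this]; exact (hIu B hB).2

theorem YBase_card : #(YBase 𝔅) ≤ max ℵ₀ #(↥𝔅) := by
  classical
  have h1 : YBase 𝔅 = Set.range (fun p : Finset ↥𝔅 × Finset ↥𝔅 =>
      Subtype.val ⁻¹' Pat 𝔅 p.1 (fun B => if B ∈ p.2 then true else false)) := by
    ext S; constructor
    · rintro ⟨s, t, rfl⟩; exact ⟨(s, t), rfl⟩
    · rintro ⟨⟨s, t⟩, rfl⟩; exact ⟨s, t, rfl⟩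
  have hfin : #(Finset ↥𝔅) ≤ max ℵ₀ #(↥𝔅) := by
    have hsurj : Function.Surjective (fun l : List ↥𝔅 => l.toFinset) := by
      intro s; exact ⟨s.toList, s.toList_toFinset⟩
    calc #(Finset ↥𝔅) ≤ #(List ↥𝔅) := Cardinal.mk_le_of_surjective hsurj
      _ ≤ max ℵ₀ #(↥𝔅) := Cardinal.mk_list_le_max _
  rw [h1]
  calc #(Set.range _) ≤ #(Finset ↥𝔅 × Finset ↥𝔅) := Cardinal.mk_range_le
    _ = #(Finset ↥𝔅) * #(Finset ↥𝔅) := by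
        rw [Cardinal.mk_prod]; simp
    _ ≤ max ℵ₀ #(↥𝔅) * max ℵ₀ #(↥𝔅) := mul_le_mul' hfin hfin
    _ = max ℵ₀ #(↥𝔅) := Cardinal.mul_eq_self (le_max_left _ _)

theorem power_transfer (hB : TopologicalSpace.IsTopologicalBasis 𝔅) (hne : Nonempty ↥𝔅)
    (hq : QuasiLindelofSp (ℕ → ↥(Yhat 𝔅))) : QuasiLindelofSp (ℕ → X) := by
  intro 𝒰 hop hcov
  have data : ∀ xv : ℕ → X, ∃ (U : Set (ℕ → X)) (I : Finset ℕ) (Bf : ℕ → ↥𝔅),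
      U ∈ 𝒰 ∧ (∀ i ∈ I, xv i ∈ (Bf i : Set X)) ∧
      (∀ yv : ℕ → X, (∀ i ∈ I, yv i ∈ (Bf i : Set X)) → yv ∈ U) := by
    intro xv
    have hx : xv ∈ ⋃₀ 𝒰 := by rw [hcov]; trivial
    obtain ⟨U, hU, hm⟩ := hx
    obtain ⟨I, u, hIu, hsub⟩ := isOpen_pi_iff.1 (hop U hU) xv hm
    have hch : ∀ i : ℕ, ∃ B : ↥𝔅, i ∈ I → (xv i ∈ (B : Set X) ∧ (B : Set X) ⊆ u i) := by
      intro i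
      by_cases hi : i ∈ I
      · obtain ⟨b, hb, hxb, hbu⟩ :=
          hB.exists_subset_of_mem_open (hIu i hi).2 (hIu i hi).1
        exact ⟨⟨b, hb⟩, fun _ => ⟨hxb, hbu⟩⟩
      · exact ⟨Classical.arbitrary _, fun h => absurd h hi⟩
    choose Bf hBf using hch
    refine ⟨U, I, Bf, hU, fun i hi => (hBf i hi).1, ?_⟩
    intro yv hyv
    exact hsub (fun i hi => (hBf i hi).2 (hyv i hi))
  choose U I Bf hU hx hsub using data
  classical
  set Chat : (ℕ → X) → Set (ℕ → ↥(Yhat 𝔅)) := fun xv =>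
    {fv | ∀ i ∈ I xv, (fv i).val (Bf xv i) = true} with hChat
  obtain ⟨𝒱', h𝒱'sub, h𝒱'c, h𝒱'cov⟩ := hq {S | ∃ xv, S = Chat xv}
    (by
      rintro _ ⟨xv, rfl⟩
      have : Chat xv = ⋂ i ∈ I xv,
          (fun fv : ℕ → ↥(Yhat 𝔅) => (fv i).val (Bf xv i)) ⁻¹' {true} := by
        ext fv; simp [hChat]
      rw [this]
      exact isOpen_biInter_finset fun i _ =>
        (isOpen_discrete _).preimage
          ((continuous_apply (Bf xv i)).comp
            (continuous_subtype_val.comp (continuous_apply i))))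
    (by
      apply eq_univ_of_forall
      intro fv
      have hxw : ∀ i : ℕ, ∃ x : X, Adh 𝔅 x (fv i).val := fun i => (fv i).2
      choose xw hxw using hxw
      refine ⟨Chat xw, ⟨xw, rfl⟩, ?_⟩
      intro i hi
      exact (hxw i).mem_true 𝔅 (hB.isOpen (Bf xw i).2) (hx xw i hi))
  set Φ : Set (ℕ → ↥(Yhat 𝔅)) → Set (ℕ → X) := fun V =>
    if h : ∃ xv, V = Chat xv then U h.choose else ∅ with hΦ
  refine ⟨Φ '' 𝒱', ?_, h𝒱'c.image Φ, ?_⟩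
  · rintro _ ⟨V, hV, rfl⟩
    have hex : ∃ xv, V = Chat xv := h𝒱'sub hV
    rw [hΦ]; simp only [dif_pos hex]; exact hU _
  · apply eq_univ_of_forall
    intro xv
    set fv : ℕ → ↥(Yhat 𝔅) := fun i => ⟨chi 𝔅 (xv i), ⟨xv i, adh_chi 𝔅 (xv i)⟩⟩ with hfv
    have : fv ∈ ⋃₀ 𝒱' := by rw [h𝒱'cov]; trivial
    obtain ⟨V, hV, hm⟩ := this
    have hex : ∃ yv, V = Chat yv := h𝒱'sub hV
    refine ⟨Φ V, ⟨V, hV, rfl⟩, ?_⟩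
    rw [hΦ]; simp only [dif_pos hex]
    apply hsub
    intro i hi
    have : (fv i).val (Bf hex.choose i) = true := by
      have := hex.choose_spec ▸ hm
      exact this i hi
    exact (chi_eq_true 𝔅).1 this

theorem prod_transfer (hB : TopologicalSpace.IsTopologicalBasis 𝔅)
    {Z : Type u} [TopologicalSpace Z]
    (hXZ : QuasiLindelofSp (X × (Z × (↥𝔅 → Bool)))) :
    QuasiLindelofSp (↥(Yhat 𝔅) × Z) := by
  intro 𝒪 hop hcov
  have data : ∀ c : ↥(Yhat 𝔅) × Z,
      ∃ (O : Set (↥(Yhat 𝔅) × Z)) (W : Set Z) (I : Finset ↥𝔅),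
      O ∈ 𝒪 ∧ IsOpen W ∧ c.2 ∈ W ∧
      ∀ (f' : ↥𝔅 → Bool) (hf' : f' ∈ Yhat 𝔅) (z' : Z),
        (∀ B ∈ I, f' B = c.1.val B) → z' ∈ W → (⟨f', hf'⟩, z') ∈ O := by
    intro c
    have : c ∈ ⋃₀ 𝒪 := by rw [hcov]; trivial
    obtain ⟨O, hO, hm⟩ := this
    obtain ⟨P, Wz, hP, hWz, h1, h2, hsub⟩ := isOpen_prod_iff.1 (hop O hO) c.1 c.2 hm
    obtain ⟨Q, hQ, hPQ⟩ := isOpen_induced_iff.1 hP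
    have hcQ : c.1.val ∈ Q := by rw [← hPQ] at h1; exact h1
    obtain ⟨I, u, hIu, hsubQ⟩ := isOpen_pi_iff.1 hQ c.1.val hcQ
    refine ⟨O, Wz, I, hO, hWz, h2, ?_⟩
    intro f' hf' z' hagree hz'
    apply hsub
    refine ⟨?_, hz'⟩
    have hfQ : f' ∈ Q := by
      apply hsubQ
      intro B hBI
      show f' B ∈ u B
      rw [hagree B hBI]
      exact (hIu B hBI).2
    rw [← hPQ]
    exact hfQ
  choose O W I hO hW hzW hstar using data
  classical
  set lft : ↥(Yhat 𝔅) × Z → Set (X × (Z × (↥𝔅 → Bool))) := fun c =>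
    (Set.univ : Set X) ×ˢ (W c ×ˢ Pat 𝔅 (I c) c.1.val) with hlft
  set junk : Set (Set (X × (Z × (↥𝔅 → Bool)))) :=
    {S | ∃ (U : Set X) (s : Finset ↥𝔅) (g : ↥𝔅 → Bool), IsOpen U ∧
      (∀ x' ∈ U, ¬ ∀ B ∈ s, (g B = true ↔ x' ∈ (B : Set X))) ∧
      S = U ×ˢ ((Set.univ : Set Z) ×ˢ Pat 𝔅 s g)} with hjunk
  obtain ⟨𝒱, hsub𝒱, hc𝒱, hcov𝒱⟩ := hXZ ({S | ∃ c, S = lft c} ∪ junk)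
    (by
      rintro S (⟨c, rfl⟩ | ⟨U, s, g, hU, hprop, rfl⟩)
      · rw [hlft]; exact isOpen_univ.prod ((hW c).prod (isClopen_Pat 𝔅 _ _).isOpen)
      · exact hU.prod (isOpen_univ.prod (isClopen_Pat 𝔅 _ _).isOpen))
    (by
      apply eq_univ_of_forall
      rintro ⟨x, z, f⟩
      by_cases hA : Adh 𝔅 x f
      · refine ⟨lft (⟨f, ⟨x, hA⟩⟩, z), Or.inl ⟨_, rfl⟩, ?_⟩
        rw [hlft]
        exact ⟨trivial, hzW _, mem_Pat_self 𝔅 _ _⟩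
      · have hA' : ∃ (s : Finset ↥𝔅) (U : Set X), IsOpen U ∧ x ∈ U ∧
            ∀ x' ∈ U, ¬ ∀ B ∈ s, (f B = true ↔ x' ∈ (B : Set X)) := by
          by_contra hcon
          push_neg at hcon
          apply hA
          intro s U hUo hxU
          obtain ⟨x', hx'U, hall⟩ := hcon s U hUo hxU
          exact ⟨x', hx'U, hall⟩
        obtain ⟨s, U, hUo, hxU, hA2⟩ := hA'
        exact ⟨U ×ˢ ((Set.univ : Set Z) ×ˢ Pat 𝔅 s f),
          Or.inr ⟨U, s, f, hUo, hA2, rfl⟩, hxU, trivial, mem_Pat_self 𝔅 _ _⟩)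
  set Φ : Set (X × (Z × (↥𝔅 → Bool))) → Set (↥(Yhat 𝔅) × Z) := fun V =>
    if h : ∃ c, V = lft c then O h.choose else ∅ with hΦ
  refine ⟨Φ '' {V ∈ 𝒱 | ∃ c, V = lft c}, ?_, ?_, ?_⟩
  · rintro _ ⟨V, ⟨hV, hex⟩, rfl⟩
    simp only [hΦ]; rw [dif_pos hex]; exact hO _
  · exact ((hc𝒱.mono (sep_subset _ _)).image Φ)
  · apply eq_univ_of_forall
    rintro ⟨y, z⟩
    obtain ⟨x, hA⟩ := y.2
    have hp : (x, (z, y.val)) ∈ ⋃₀ 𝒱 := by rw [hcov𝒱]; trivial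
    obtain ⟨V, hV, hm⟩ := hp
    rcases hsub𝒱 hV with hex0 | ⟨U, s, g, hUo, hprop, rfl⟩
    · have hex : ∃ c, V = lft c := hex0
      refine ⟨Φ V, ⟨V, ⟨hV, hex⟩, rfl⟩, ?_⟩
      simp only [hΦ]; rw [dif_pos hex]
      have heq : V = lft hex.choose := hex.choose_spec
      rw [heq] at hm
      simp only [hlft] at hm
      obtain ⟨-, hzW', hPat⟩ := hm
      have := hstar hex.choose y.val y.2 z hPat hzW'
      exact this
    · exfalso
      obtain ⟨hxU, -, hPat⟩ := hm
      obtain ⟨x', hx'U, hiff⟩ := hA s U hUo hxU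
      apply hprop x' hx'U
      intro B hBs
      rw [← hPat B hBs]
      exact hiff B hBs


end Aux

/-- If there is a productively quasi-Lindelöf space of weight ≤ κ that is
not powerfully quasi-Lindelöf, then there is a zero-dimensional productively Lindelöf
space of weight ≤ κ that is not powerfully Lindelöf. -/
theorem stmt11 (κ : Cardinal.{u}) (hκ : ℵ₀ ≤ κ)
    (h : ∃ (X : Type u) (_ : TopologicalSpace X),
      ProductivelyQuasiLindelofSp X ∧ WeightLE X κ ∧ ¬ PowerfullyQuasiLindelofSp X) :
    ∃ (Y : Type u) (_ : TopologicalSpace Y),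
      ZeroDimensionalSp Y ∧ ProductivelyLindelofSp Y ∧ WeightLE Y κ ∧
        ¬ PowerfullyLindelofSp Y := by
  classical
  obtain ⟨X, _, hprodX, ⟨𝔅, hB, hcard⟩, hnpow⟩ := h
  by_cases hXe : Nonempty X
  case neg =>
    exfalso
    apply hnpow
    intro 𝒰 h1 h2
    refine ⟨∅, empty_subset _, countable_empty, ?_⟩
    have hE : IsEmpty (ℕ → X) := ⟨fun f => (not_nonempty_iff.1 hXe).false (f 0)⟩
    rw [sUnion_empty, eq_comm, Set.univ_eq_empty_iff]
    exact hE
  obtain ⟨x₀⟩ := hXe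
  obtain ⟨b₀, hb₀, -, -⟩ := hB.exists_subset_of_mem_open (mem_univ x₀) isOpen_univ
  haveI : Nonempty ↥𝔅 := ⟨⟨b₀, hb₀⟩⟩
  refine ⟨↥(Yhat 𝔅), inferInstance, ?_, ?_, ?_, ?_⟩
  · exact ⟨⟨⟨chi 𝔅 x₀, ⟨x₀, adh_chi 𝔅 x₀⟩⟩⟩, inferInstance,
      YBase 𝔅, YBase_basis 𝔅, YBase_clopen 𝔅⟩
  · intro Z _ hZ
    haveI := hZ.1
    haveI := hZ.2.1
    refine ⟨inferInstance, inferInstance, ?_⟩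
    apply prod_transfer 𝔅 hB
    apply hprodX (Z × (↥𝔅 → Bool))
    exact ⟨inferInstance, inferInstance, quasi_prod_compact hZ.2.2⟩
  · exact ⟨YBase 𝔅, YBase_basis 𝔅, (YBase_card 𝔅).trans (max_le hκ hcard)⟩
  · intro hpow
    exact hnpow (power_transfer 𝔅 hB ‹Nonempty ↥𝔅› hpow.2.2)
end

section
/- Let κ be an infinite cardinal. Assume that X is a T1 topological space such that every open cover of X has a subcover of size at most κ (i.e. ℓ(X) ≤ κ) and X has a point-2^κ base. Then the weight of X satisfies w(X) ≤ 2^κ. -/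
open Set Cardinal Topology

universe u v

/-! A closing-off argument of length `κ⁺` produces a set `D` of size at most `2 ^ κ` such that
whenever at most `κ` basic open sets, each meeting `D`, fail to cover `X`, some point of `D`
lies outside their union; there are only `(2 ^ κ) ^ κ = 2 ^ κ` such families to take care of at
each stage, since the base is point-`2 ^ κ`. Covering `closure D` by basic sets missing a
point `x ∉ closure D` (here `T1` is used) and shrinking this cover to `κ` members contradicts
that property, so `D` is dense. Every nonempty basic open set meets `D`, and each point of `D`
lies in at most `2 ^ κ` of them, so the base has at most `2 ^ κ` members. -/

theorem Cardinal.mk_iUnion_le_mul {α ι : Type u} {f : ι → Set α} {c : Cardinal.{u}}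
    (h : ∀ i, #(f i) ≤ c) : #(⋃ i, f i) ≤ #ι * c :=
  mk_iUnion_le_sum_mk.trans ((sum_le_sum _ _ h).trans (sum_const' ι c).le)

theorem exists_forall_lt_of_mk_lt_cof {ι W : Type u} [LinearOrder W] (f : ι → W)
    (h : #ι < Order.cof W) : ∃ w, ∀ i, f i < w := by
  by_contra! hf
  have hcofinal : IsCofinal (range f) := fun w ↦ by
    obtain ⟨i, hi⟩ := hf w
    exact ⟨f i, mem_range_self i, hi⟩
  exact ((Order.cof_le hcofinal).trans mk_range_le).not_gt h

section TransfiniteStage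

variable {α W : Type u} [LinearOrder W] [WellFoundedLT W]

noncomputable def transfiniteStage (step : Set α → Set α) : W → Set α :=
  WellFounded.fix wellFounded_lt fun w ih ↦ step (⋃ w' : Iio w, ih w'.1 w'.2)

theorem transfiniteStage_eq (step : Set α → Set α) (w : W) :
    transfiniteStage step w = step (⋃ w' : Iio w, transfiniteStage step w'.1) := by
  rw [transfiniteStage, WellFounded.fix_eq]

theorem mk_transfiniteStage_le {step : Set α → Set α} {c : Cardinal.{u}} (hc : ℵ₀ ≤ c)
    (hW : #W ≤ c) (hstep : ∀ A : Set α, #A ≤ c → #(step A) ≤ c) (w : W) :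
    #(transfiniteStage step w) ≤ c := by
  induction w using WellFoundedLT.induction with
  | ind w ih =>
    rw [transfiniteStage_eq]
    refine hstep _ ?_
    calc #(⋃ w' : Iio w, transfiniteStage step w'.1)
        ≤ #(Iio w) * c := mk_iUnion_le_mul fun w' ↦ ih w'.1 w'.2
      _ ≤ c * c := mul_le_mul' ((mk_set_le _).trans hW) le_rfl
      _ = c := mul_eq_self hc

end TransfiniteStage

theorem exists_mk_le_forall_subset_of_power_eq_self {α : Type u} {κ c : Cardinal.{u}}
    (hκ : ℵ₀ ≤ κ) (hκc : κ < c) (hc : c ^ κ = c) (F : Set α → Set α)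
    (hF : ∀ S : Set α, #S ≤ κ → #(F S) ≤ c) :
    ∃ D : Set α, #D ≤ c ∧ ∀ S ⊆ D, #S ≤ κ → F S ⊆ D := by
  have hc₀ : ℵ₀ ≤ c := hκ.trans hκc.le
  let step : Set α → Set α := fun A ↦ A ∪ ⋃ S ∈ {S : Set α | S ⊆ A ∧ #S ≤ κ}, F S
  have hstep : ∀ A : Set α, #A ≤ c → #(step A) ≤ c := by
    intro A hA
    have hsmall : #{S : Set α | S ⊆ A ∧ #S ≤ κ} ≤ c :=
      calc #{S : Set α | S ⊆ A ∧ #S ≤ κ} ≤ max #A ℵ₀ ^ κ := mk_bounded_subset_le A κ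
        _ ≤ c ^ κ := power_le_power_right (max_le hA hc₀)
        _ = c := hc
    calc #(step A) ≤ #A + #(⋃ S ∈ {S : Set α | S ⊆ A ∧ #S ≤ κ}, F S) := mk_union_le _ _
      _ ≤ c + c * c := add_le_add hA <| (mk_biUnion_le _ _).trans <|
          mul_le_mul' hsmall (ciSup_le' fun S ↦ hF _ S.2.2)
      _ = c := by rw [mul_eq_self hc₀, add_eq_self hc₀]
  let W := (Order.succ κ).ord.ToType
  have hW : #W ≤ c := by
    rw [mk_toType, card_ord]
    exact Order.succ_le_of_lt hκc
  refine ⟨⋃ w : W, transfiniteStage step w, ?_, fun S hSD hS ↦ ?_⟩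
  · calc #(⋃ w : W, transfiniteStage step w) ≤ #W * c :=
          mk_iUnion_le_mul (mk_transfiniteStage_le hc₀ hW hstep)
      _ ≤ c * c := mul_le_mul' hW le_rfl
      _ = c := mul_eq_self hc₀
  have hstage : ∀ s : S, ∃ w : W, (s : α) ∈ transfiniteStage step w :=
    fun s ↦ mem_iUnion.1 (hSD s.2)
  choose f hf using hstage
  -- `κ⁺` is regular, so the `≤ κ` stages at which the points of `S` appear are bounded.
  have hcof : #S < Order.cof W := by
    rw [Ordinal.cof_toType, (isRegular_succ hκ).cof_ord]
    exact hS.trans_lt (Order.lt_succ κ)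
  obtain ⟨w₀, hw₀⟩ := exists_forall_lt_of_mk_lt_cof f hcof
  have hSw₀ : S ⊆ ⋃ w : Iio w₀, transfiniteStage step (w : W) :=
    fun s hs ↦ mem_iUnion.2 ⟨⟨f ⟨s, hs⟩, hw₀ _⟩, hf ⟨s, hs⟩⟩
  refine subset_iUnion_of_subset w₀ ?_
  rw [transfiniteStage_eq]
  exact subset_union_of_subset_right
    (subset_biUnion_of_mem (u := F) (s := {S' : Set α | S' ⊆ _ ∧ #S' ≤ κ}) ⟨hSw₀, hS⟩) _

theorem PointLE.mk_sep_inter_nonempty_le {Z : Type u} {B : Set (Set Z)} {c : Cardinal.{u}}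
    (hB : PointLE B c) (S : Set Z) : #{b ∈ B | (b ∩ S).Nonempty} ≤ #S * c := by
  have hsub : {b ∈ B | (b ∩ S).Nonempty} ⊆ ⋃ s : S, {b ∈ B | (s : Z) ∈ b} := by
    rintro b ⟨hb, s, hsb, hsS⟩
    exact mem_iUnion.2 ⟨⟨s, hsS⟩, hb, hsb⟩
  exact (mk_le_mk_of_subset hsub).trans (mk_iUnion_le_mul fun s ↦ hB s)

theorem PointLE.mk_le_of_dense {X : Type u} [TopologicalSpace X] {B : Set (Set X)}
    {c : Cardinal.{u}} (hc : ℵ₀ ≤ c) (hB : PointLE B c) (hBo : ∀ b ∈ B, IsOpen b)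
    {D : Set X} (hD : Dense D) (hDc : #D ≤ c) : #B ≤ c := by
  have hsub : B ⊆ insert ∅ {b ∈ B | (b ∩ D).Nonempty} := by
    intro b hb
    rcases b.eq_empty_or_nonempty with rfl | hne
    · exact mem_insert _ _
    · exact mem_insert_of_mem _ ⟨hb, hD.inter_open_nonempty b (hBo b hb) hne⟩
  calc #B ≤ #{b ∈ B | (b ∩ D).Nonempty} + 1 := (mk_le_mk_of_subset hsub).trans mk_insert_le
    _ ≤ c * c + 1 := add_le_add_left ((hB.mk_sep_inter_nonempty_le D).trans
        (mul_le_mul' hDc le_rfl)) 1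
    _ = c := by rw [mul_eq_self hc, add_one_eq hc]

theorem PointLE.mk_families_meeting_le {Z : Type u} {B : Set (Set Z)} {κ c : Cardinal.{u}}
    (hc : ℵ₀ ≤ c) (hcκ : c ^ κ = c) (hB : PointLE B c) {S : Set Z} (hS : #S ≤ c) :
    #{𝒲 : Set (Set Z) | 𝒲 ⊆ B ∧ #𝒲 ≤ κ ∧ ∀ b ∈ 𝒲, (b ∩ S).Nonempty} ≤ c := by
  have hsub : {𝒲 : Set (Set Z) | 𝒲 ⊆ B ∧ #𝒲 ≤ κ ∧ ∀ b ∈ 𝒲, (b ∩ S).Nonempty} ⊆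
      {𝒲 | 𝒲 ⊆ {b ∈ B | (b ∩ S).Nonempty} ∧ #𝒲 ≤ κ} :=
    fun 𝒲 ⟨hB𝒲, h𝒲κ, h𝒲S⟩ ↦ ⟨fun b hb ↦ ⟨hB𝒲 hb, h𝒲S b hb⟩, h𝒲κ⟩
  have hmeet : #{b ∈ B | (b ∩ S).Nonempty} ≤ c :=
    (hB.mk_sep_inter_nonempty_le S).trans ((mul_le_mul' hS le_rfl).trans (mul_eq_self hc).le)
  calc _ ≤ max #{b ∈ B | (b ∩ S).Nonempty} ℵ₀ ^ κ :=
        (mk_le_mk_of_subset hsub).trans (mk_bounded_subset_le _ κ)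
    _ ≤ c ^ κ := power_le_power_right (max_le hmeet hc)
    _ = c := hcκ

theorem LindelofNumberLE.exists_subcover_of_isClosed {X : Type u} [TopologicalSpace X]
    {κ : Cardinal.{u}} (hl : LindelofNumberLE X κ) {C : Set X} (hC : IsClosed C)
    {𝒰 : Set (Set X)} (h𝒰 : ∀ U ∈ 𝒰, IsOpen U) (hC𝒰 : C ⊆ ⋃₀ 𝒰) :
    ∃ 𝒱 ⊆ 𝒰, #𝒱 ≤ κ ∧ C ⊆ ⋃₀ 𝒱 := by
  have hopen : ∀ U ∈ insert Cᶜ 𝒰, IsOpen U := by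
    rintro U (rfl | hU)
    exacts [hC.isOpen_compl, h𝒰 U hU]
  have hcover : ⋃₀ insert Cᶜ 𝒰 = Set.univ := by
    refine eq_univ_of_forall fun x ↦ ?_
    by_cases hx : x ∈ C
    · obtain ⟨U, hU, hxU⟩ := hC𝒰 hx
      exact ⟨U, mem_insert_of_mem _ hU, hxU⟩
    · exact ⟨Cᶜ, mem_insert _ _, hx⟩
  obtain ⟨𝒱, h𝒱, h𝒱κ, h𝒱cover⟩ := hl _ hopen hcover
  refine ⟨𝒱 ∩ 𝒰, inter_subset_right, (mk_le_mk_of_subset inter_subset_left).trans h𝒱κ,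
    fun x hx ↦ ?_⟩
  obtain ⟨V, hV, hxV⟩ := h𝒱cover.symm ▸ mem_univ x
  rcases h𝒱 hV with rfl | hV𝒰
  exacts [absurd hx hxV, ⟨V, ⟨hV, hV𝒰⟩, hxV⟩]

theorem TopologicalSpace.IsTopologicalBasis.dense_of_lindelofNumberLE {X : Type u}
    [TopologicalSpace X] [T1Space X] {κ : Cardinal.{u}} (hl : LindelofNumberLE X κ)
    {B : Set (Set X)} (hB : IsTopologicalBasis B) {D : Set X}
    (hD : ∀ 𝒲 ⊆ B, #𝒲 ≤ κ → (∀ b ∈ 𝒲, (b ∩ D).Nonempty) → D ⊆ ⋃₀ 𝒲 → ⋃₀ 𝒲 = Set.univ) :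
    Dense D := by
  intro x
  by_contra hx
  have hcover : closure D ⊆ ⋃₀ {b ∈ B | x ∉ b} := by
    intro y hy
    have hyx : y ∈ ({x}ᶜ : Set X) := fun h ↦ hx (h ▸ hy)
    obtain ⟨b, hbB, hyb, hbx⟩ := hB.exists_subset_of_mem_open hyx isOpen_compl_singleton
    exact ⟨b, ⟨hbB, fun hxb ↦ hbx hxb rfl⟩, hyb⟩
  obtain ⟨𝒱, h𝒱, h𝒱κ, h𝒱cover⟩ := hl.exists_subcover_of_isClosed isClosed_closure
    (fun b hb ↦ hB.isOpen hb.1) hcover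
  have hD𝒲 : D ⊆ ⋃₀ {b ∈ 𝒱 | (b ∩ D).Nonempty} := by
    intro d hd
    obtain ⟨V, hV, hdV⟩ := h𝒱cover (subset_closure hd)
    exact ⟨V, ⟨hV, d, hdV, hd⟩, hdV⟩
  have hx𝒲 : x ∉ ⋃₀ {b ∈ 𝒱 | (b ∩ D).Nonempty} := fun ⟨V, hV, hxV⟩ ↦ (h𝒱 hV.1).2 hxV
  have h𝒲univ := hD _ (fun b hb ↦ (h𝒱 hb.1).1)
    ((mk_le_mk_of_subset (sep_subset _ _)).trans h𝒱κ) (fun b hb ↦ hb.2) hD𝒲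
  exact hx𝒲 (h𝒲univ ▸ mem_univ x)

theorem exists_dense_mk_le_of_pointLE {X : Type u} [TopologicalSpace X] [T1Space X]
    {κ c : Cardinal.{u}} (hκ : ℵ₀ ≤ κ) (hκc : κ < c) (hc : c ^ κ = c)
    (hl : LindelofNumberLE X κ) {B : Set (Set X)}
    (hB : TopologicalSpace.IsTopologicalBasis B) (hpt : PointLE B c) :
    ∃ D : Set X, Dense D ∧ #D ≤ c := by
  let families (S : Set X) : Set (Set (Set X)) :=
    {𝒲 | 𝒲 ⊆ B ∧ #𝒲 ≤ κ ∧ ∀ b ∈ 𝒲, (b ∩ S).Nonempty}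
  let F (S : Set X) : Set X :=
    range fun 𝒲 : {𝒲 | 𝒲 ∈ families S ∧ (⋃₀ 𝒲)ᶜ.Nonempty} ↦ 𝒲.2.2.some
  have hF : ∀ S : Set X, #S ≤ κ → #(F S) ≤ c := fun S hS ↦ mk_range_le.trans <|
    (mk_le_mk_of_subset fun _ h ↦ h.1).trans <|
      hpt.mk_families_meeting_le (hκ.trans hκc.le) hc (hS.trans hκc.le)
  obtain ⟨D, hDc, hDF⟩ := exists_mk_le_forall_subset_of_power_eq_self hκ hκc hc F hF
  refine ⟨D, hB.dense_of_lindelofNumberLE hl fun 𝒲 h𝒲B h𝒲κ h𝒲D hD𝒲 ↦ ?_, hDc⟩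
  by_contra hne
  have hpoint : ∀ b : 𝒲, ∃ d ∈ D, d ∈ (b : Set X) := fun b ↦
    let ⟨d, hdb, hdD⟩ := h𝒲D b b.2
    ⟨d, hdD, hdb⟩
  choose g hgD hgb using hpoint
  have h𝒲 : 𝒲 ∈ families (range g) :=
    ⟨h𝒲B, h𝒲κ, fun b hb ↦ ⟨g ⟨b, hb⟩, hgb ⟨b, hb⟩, mem_range_self _⟩⟩
  have hnonempty : (⋃₀ 𝒲)ᶜ.Nonempty := nonempty_compl.2 hne
  have hout : hnonempty.some ∈ D :=
    hDF _ (range_subset_iff.2 hgD) (mk_range_le.trans h𝒲κ) ⟨⟨𝒲, h𝒲, hnonempty⟩, rfl⟩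
  exact hnonempty.some_mem (hD𝒲 hout)

/-- Let κ be infinite. Every T1 space with ℓ(X) ≤ κ and a point-2^κ base
has weight at most 2^κ. -/
theorem stmt16 (X : Type u) [TopologicalSpace X] [T1Space X]
    (κ : Cardinal.{u}) (hκ : ℵ₀ ≤ κ)
    (hl : LindelofNumberLE X κ)
    (hbase : ∃ B : Set (Set X), TopologicalSpace.IsTopologicalBasis B ∧
      PointLE B (2 ^ κ)) :
    WeightLE X (2 ^ κ) := by
  obtain ⟨B, hB, hpt⟩ := hbase
  have hκc : κ < (2 : Cardinal) ^ κ := cantor κ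
  have hc : ((2 : Cardinal) ^ κ) ^ κ = 2 ^ κ := by rw [← power_mul, mul_eq_self hκ]
  obtain ⟨D, hD, hDc⟩ := exists_dense_mk_le_of_pointLE hκ hκc hc hl hB hpt
  exact ⟨B, hB, hpt.mk_le_of_dense (hκ.trans hκc.le) (fun b hb ↦ hB.isOpen hb) hD hDc⟩
end

section
/- Let X be a Lindelöf topological space with a point-𝔠 base. Then the weight of X satisfies w(X) ≤ 𝔠. -/
open Set Cardinal Topology

universe u v

/-!
A point-`κ` base `B` has at most `|D| · κ` members meeting a set `D`, and if `D` is dense these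
members still form a base; so it suffices to find a dense set of size at most `κ`, where
`κ ^ ℵ₀ = κ`. Close a set under the operation "for every countable `C ⊆ B` whose members all meet
the set and which does not cover `X`, add a point outside `⋃ C`", iterating `ω₁` times. Each stage
has size at most `κ ^ ℵ₀ = κ`, and since `ω₁` has uncountable cofinality the union `D` is closed
under the operation. If some `x` were not in `closure D`, regularity and the Lindelöf property give
a countable cover of `X` by a basic `W₀ ∋ x` missing `D` and basic sets whose closures miss `x`; its
members meeting `D` then cover `D` but not `x`, contradicting closedness.
-/

open TopologicalSpace Ordinal

theorem PointLE.mk_sep_inter_nonempty_le_s17 {Z : Type u} {𝒲 : Set (Set Z)} {κ : Cardinal.{u}}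
    (h𝒲 : PointLE 𝒲 κ) (hκ : ℵ₀ ≤ κ) {D : Set Z} (hD : #D ≤ κ) :
    #{W ∈ 𝒲 | (W ∩ D).Nonempty} ≤ κ := by
  have hsub : {W ∈ 𝒲 | (W ∩ D).Nonempty} ⊆ ⋃ d ∈ D, {W ∈ 𝒲 | d ∈ W} := by
    rintro W ⟨hW, d, hdW, hdD⟩
    exact mem_biUnion hdD ⟨hW, hdW⟩
  calc #{W ∈ 𝒲 | (W ∩ D).Nonempty} ≤ #(⋃ d ∈ D, {W ∈ 𝒲 | d ∈ W}) := mk_le_mk_of_subset hsub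
    _ ≤ #D * ⨆ d : D, #{W ∈ 𝒲 | (d : Z) ∈ W} := mk_biUnion_le _ _
    _ ≤ κ * κ := by gcongr; exact ciSup_le' fun d => h𝒲 d
    _ = κ := mul_eq_self hκ

section DenseBase

variable {X : Type u} [TopologicalSpace X]

theorem TopologicalSpace.IsTopologicalBasis.sep_inter_nonempty {B : Set (Set X)}
    (hB : IsTopologicalBasis B) {D : Set X} (hD : Dense D) :
    IsTopologicalBasis {W ∈ B | (W ∩ D).Nonempty} := by
  refine isTopologicalBasis_of_isOpen_of_nhds (fun W hW => hB.isOpen hW.1) ?_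
  intro x U hxU hU
  obtain ⟨W, hWB, hxW, hWU⟩ := hB.exists_subset_of_mem_open hxU hU
  exact ⟨W, ⟨hWB, hD.inter_open_nonempty W (hB.isOpen hWB) ⟨x, hxW⟩⟩, hxW, hWU⟩

theorem weightLE_of_dense_of_pointLE {B : Set (Set X)} {κ : Cardinal.{u}}
    (hB : IsTopologicalBasis B) (hBκ : PointLE B κ) (hκ : ℵ₀ ≤ κ) {D : Set X} (hD : Dense D)
    (hDκ : #D ≤ κ) : WeightLE X κ :=
  ⟨_, hB.sep_inter_nonempty hD, hBκ.mk_sep_inter_nonempty_le_s17 hκ hDκ⟩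

end DenseBase

section WitnessClosure

variable {X : Type u} (B : Set (Set X))

def countableNonCovers (D : Set X) : Set (Set (Set X)) :=
  {C | C ⊆ B ∧ C.Countable ∧ (∀ W ∈ C, (W ∩ D).Nonempty) ∧ (⋃₀ C)ᶜ.Nonempty}

noncomputable def witnesses (D : Set X) : Set X :=
  range fun C : countableNonCovers B D => C.2.2.2.2.some

noncomputable def witnessStage (i : Ordinal.{u}) : Set X :=
  witnesses B (⋃ j < i, witnessStage j)
termination_by i

theorem witnessStage_eq (i : Ordinal.{u}) :
    witnessStage B i = witnesses B (⋃ j < i, witnessStage B j) := by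
  rw [witnessStage]

variable {B}

theorem exists_mem_witnesses_notMem {D : Set X} {C : Set (Set X)}
    (hC : C ∈ countableNonCovers B D) : ∃ x ∈ witnesses B D, x ∉ ⋃₀ C :=
  ⟨_, mem_range_self ⟨C, hC⟩, mem_compl_iff _ _ |>.1 hC.2.2.2.some_mem⟩

variable {κ : Cardinal.{u}}

theorem PointLE.mk_countableNonCovers_le (hB : PointLE B κ) (hκ : ℵ₀ ≤ κ)
    (hκω : κ ^ ℵ₀ ≤ κ) {D : Set X} (hD : #D ≤ κ) : #(countableNonCovers B D) ≤ κ := by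
  set S := {W ∈ B | (W ∩ D).Nonempty}
  have hsub : countableNonCovers B D ⊆ {C | C ⊆ S ∧ #C ≤ ℵ₀} := by
    rintro C ⟨hCB, hCc, hCD, -⟩
    exact ⟨fun W hW => ⟨hCB hW, hCD W hW⟩, le_aleph0_iff_set_countable.2 hCc⟩
  calc #(countableNonCovers B D) ≤ #{C : Set (Set X) // C ⊆ S ∧ #C ≤ ℵ₀} := mk_le_mk_of_subset hsub
    _ ≤ max #S ℵ₀ ^ ℵ₀ := mk_bounded_subset_le S ℵ₀
    _ ≤ κ ^ ℵ₀ := power_le_power_right (max_le (hB.mk_sep_inter_nonempty_le_s17 hκ hD) hκ)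
    _ ≤ κ := hκω

theorem PointLE.mk_biUnion_witnessStage_le (hB : PointLE B κ) (hκ : ℵ₁ ≤ κ)
    (hκω : κ ^ ℵ₀ ≤ κ) {i : Ordinal.{u}} (hi : i ≤ ω₁) :
    #(⋃ j < i, witnessStage B j) ≤ κ := by
  have hκ₀ : ℵ₀ ≤ κ := aleph0_lt_aleph_one.le.trans hκ
  induction i using WellFoundedLT.induction with
  | ind i ih =>
    refine mk_biUnion_le_of_le ((card_le_card hi).trans (by simpa using hκ)) hκ₀ _ ?_
    intro j hj
    rw [witnessStage_eq]
    exact mk_range_le.trans (hB.mk_countableNonCovers_le hκ₀ hκω (ih j hj (hj.le.trans hi)))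

theorem exists_lt_omega_one_of_mem_countableNonCovers {C : Set (Set X)}
    (hC : C ∈ countableNonCovers B (⋃ j < ω₁, witnessStage B j)) :
    ∃ i < ω₁, C ∈ countableNonCovers B (⋃ j < i, witnessStage B j) := by
  obtain ⟨hCB, hCc, hCD, hCcov⟩ := hC
  have : Countable C := hCc.to_subtype
  choose f hf using fun W : C => hCD W W.2
  simp only [mem_inter_iff, mem_iUnion, exists_prop] at hf
  choose j hj hfj using fun W => (hf W).2
  refine ⟨⨆ W, j W + 1, ?_, hCB, hCc, fun W hW => ?_, hCcov⟩
  · exact lift_iSup_add_one_lt_of_lt_cof (by simp [(mk_le_aleph0_iff.2 ‹_›).trans_lt]) hj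
  · exact ⟨f ⟨W, hW⟩, (hf ⟨W, hW⟩).1,
      mem_biUnion (lt_iSup_add_one j ⟨W, hW⟩) (hfj ⟨W, hW⟩)⟩

end WitnessClosure

section Lindelof

variable {X : Type u} [TopologicalSpace X] [RegularSpace X] [T1Space X] {B : Set (Set X)}

theorem dense_of_forall_countableNonCovers (hX : QuasiLindelofSp X) (hB : IsTopologicalBasis B)
    {D : Set X} (hD : ∀ C ∈ countableNonCovers B D, ¬D ⊆ ⋃₀ C) : Dense D := by
  intro x
  by_contra hx
  obtain ⟨W₀, hW₀B, hxW₀, hW₀D⟩ :=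
    hB.exists_subset_of_mem_open hx isClosed_closure.isOpen_compl
  set 𝒰 := insert W₀ {W ∈ B | x ∉ closure W}
  have h𝒰B : 𝒰 ⊆ B := by
    rintro W (rfl | hW)
    exacts [hW₀B, hW.1]
  have h𝒰 : ⋃₀ 𝒰 = Set.univ := by
    refine eq_univ_of_forall fun y => ?_
    by_cases hy : y = x
    · exact ⟨W₀, mem_insert _ _, hy ▸ hxW₀⟩
    · obtain ⟨W, hWB, hyW, hW⟩ := hB.exists_closure_subset (isOpen_compl_singleton.mem_nhds hy)
      exact ⟨W, mem_insert_of_mem _ ⟨hWB, fun h => hW h rfl⟩, hyW⟩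
  obtain ⟨𝒱, h𝒱𝒰, h𝒱c, h𝒱⟩ := hX 𝒰 (fun W hW => hB.isOpen (h𝒰B hW)) h𝒰
  set C := {W ∈ 𝒱 | (W ∩ D).Nonempty}
  have hDC : D ⊆ ⋃₀ C := by
    intro d hd
    obtain ⟨W, hW𝒱, hdW⟩ := h𝒱 ▸ Set.mem_univ d
    exact ⟨W, ⟨hW𝒱, d, hdW, hd⟩, hdW⟩
  have hxC : x ∉ ⋃₀ C := by
    rintro ⟨W, ⟨hW𝒱, d, hdW, hdD⟩, hxW⟩
    rcases h𝒱𝒰 hW𝒱 with rfl | hW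
    · exact hW₀D hdW (subset_closure hdD)
    · exact hW.2 (subset_closure hxW)
  exact hD C ⟨fun W hW => h𝒰B (h𝒱𝒰 hW.1), h𝒱c.mono (sep_subset _ _), fun W hW => hW.2,
    x, hxC⟩ hDC

variable {κ : Cardinal.{u}}

theorem PointLE.exists_dense_mk_le (hX : QuasiLindelofSp X) (hB : IsTopologicalBasis B)
    (hBκ : PointLE B κ) (hκ : ℵ₁ ≤ κ) (hκω : κ ^ ℵ₀ ≤ κ) : ∃ D : Set X, Dense D ∧ #D ≤ κ := by
  refine ⟨⋃ j < ω₁, witnessStage B j, dense_of_forall_countableNonCovers hX hB fun C hC hDC => ?_,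
    hBκ.mk_biUnion_witnessStage_le hκ hκω le_rfl⟩
  obtain ⟨i, hi, hCi⟩ := exists_lt_omega_one_of_mem_countableNonCovers hC
  obtain ⟨x, hx, hxC⟩ := exists_mem_witnesses_notMem hCi
  exact hxC (hDC (mem_biUnion hi (witnessStage_eq B i ▸ hx)))

theorem weightLE_of_quasiLindelofSp_of_pointLE (hX : QuasiLindelofSp X)
    (hB : IsTopologicalBasis B) (hBκ : PointLE B κ) (hκ : ℵ₁ ≤ κ) (hκω : κ ^ ℵ₀ ≤ κ) :
    WeightLE X κ :=
  let ⟨_, hD, hDκ⟩ := hBκ.exists_dense_mk_le hX hB hκ hκω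
  weightLE_of_dense_of_pointLE hB hBκ (aleph0_lt_aleph_one.le.trans hκ) hD hDκ

end Lindelof

/-- Every Lindelöf space with a point-𝔠 base has weight at most 𝔠. -/
theorem stmt17 (X : Type u) [TopologicalSpace X] (hL : EngLindelofSp X)
    (hbase : ∃ B : Set (Set X), TopologicalSpace.IsTopologicalBasis B ∧
      PointLE B Cardinal.continuum) :
    WeightLE X Cardinal.continuum := by
  obtain ⟨hreg, hT1, hX⟩ := hL
  obtain ⟨B, hB, hBκ⟩ := hbase
  exact weightLE_of_quasiLindelofSp_of_pointLE hX hB hBκ aleph_one_le_continuum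
    continuum_power_aleph0.le
end
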